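/- arXiv:2111.04358 — 5 statements merged into one kernel-verified Lean document; each statement's English description precedes it below -/
import Mathlib

section
/- For any nonnegative n×n matrix A and any column index i, the inequalities r_{e_i}(A) ≤ ρ_{e_i}(A) ≤ n·r_{e_i}(A) hold, where r_{e_i} is the max-algebra local spectral radius and ρ_{e_i} the classical local spectral radius at e_i. -/
open Filter Finset

noncomputable section

/-- Max-algebra product of matrices: `(A ⊗ B) i j = max_l A i l * B l j`. -/
def maxMul {n : ℕ} (A B : Matrix (Fin n) (Fin n) ℝ) : Matrix (Fin n) (Fin n) ℝ :=
  fun i j => ⨆ l, A i l * B l j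

/-- Max-algebra powers `A^k_⊗`. -/
def maxPow {n : ℕ} (A : Matrix (Fin n) (Fin n) ℝ) : ℕ → Matrix (Fin n) (Fin n) ℝ
  | 0 => fun i j => if i = j then 1 else 0
  | k + 1 => maxMul (maxPow A k) A

/-- Max-algebra action of a matrix on a vector: `(A ⊗ x) i = max_j A i j * x j`. -/
def maxVecMul {n : ℕ} (A : Matrix (Fin n) (Fin n) ℝ) (x : Fin n → ℝ) : Fin n → ℝ :=
  fun i => ⨆ j, A i j * x j

/-- Max norm of a vector: `‖x‖ = max_i x i`. -/
def vnorm {n : ℕ} (x : Fin n → ℝ) : ℝ := ⨆ i, x i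

/-- Max entry norm of a matrix: `‖A‖ = max_{i,j} A i j`. -/
def matNorm {n : ℕ} (A : Matrix (Fin n) (Fin n) ℝ) : ℝ := ⨆ i, ⨆ j, A i j

/-- Max-algebra local spectral radius `r_x(A) = lim_k ‖A^k_⊗ ⊗ x‖^{1/k}`
(the limit exists, so we may define it as the `limsup`). -/
def rloc {n : ℕ} (A : Matrix (Fin n) (Fin n) ℝ) (x : Fin n → ℝ) : ℝ :=
  Filter.atTop.limsup fun k : ℕ => (vnorm (maxVecMul (maxPow A k) x)) ^ ((k : ℝ)⁻¹)

/-- Classical local spectral radius `ρ_x(A) = limsup_k ‖A^k x‖^{1/k}`. -/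
def rhox {n : ℕ} (A : Matrix (Fin n) (Fin n) ℝ) (x : Fin n → ℝ) : ℝ :=
  Filter.atTop.limsup fun k : ℕ => (vnorm ((A ^ k).mulVec x)) ^ ((k : ℝ)⁻¹)

/-- Hadamard (entrywise) power `A^{(t)} = [a_{ij}^t]`. -/
def hadPow {n : ℕ} (A : Matrix (Fin n) (Fin n) ℝ) (t : ℝ) : Matrix (Fin n) (Fin n) ℝ :=
  fun i j => (A i j) ^ t

/-- The `i`-th standard basis vector. -/
def e {n : ℕ} (i : Fin n) : Fin n → ℝ := fun j => if j = i then 1 else 0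

end

section auxlem
set_option linter.unusedSectionVars false

variable {n : ℕ} [Nonempty (Fin n)] {A : Matrix (Fin n) (Fin n) ℝ}

private lemma bdd {f : Fin n → ℝ} : BddAbove (Set.range f) :=
  Set.Finite.bddAbove (Set.finite_range f)

private lemma maxPow_nonneg (hA : ∀ i j, 0 ≤ A i j) : ∀ k j l, 0 ≤ maxPow A k j l := by
  intro k
  induction k with
  | zero => intro j l; simp only [maxPow]; split <;> norm_num
  | succ k ih =>
    intro j l
    calc (0:ℝ) ≤ maxPow A k j j * A j l := mul_nonneg (ih j j) (hA j l)
    _ ≤ ⨆ m, maxPow A k j m * A m l := le_ciSup (f := fun m => maxPow A k j m * A m l) bdd j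
    _ = maxPow A (k+1) j l := rfl

private lemma pow_entry_nonneg (hA : ∀ i j, 0 ≤ A i j) : ∀ k j l, 0 ≤ (A ^ k) j l := by
  intro k
  induction k with
  | zero => intro j l; rw [pow_zero, Matrix.one_apply]; split <;> norm_num
  | succ k ih =>
    intro j l
    rw [pow_succ, Matrix.mul_apply]
    exact Finset.sum_nonneg fun m _ => mul_nonneg (ih j m) (hA m l)

private lemma maxPow_le_pow (hA : ∀ i j, 0 ≤ A i j) : ∀ k j l, maxPow A k j l ≤ (A ^ k) j l := by
  intro k
  induction k with
  | zero => intro j l; simp [maxPow, Matrix.one_apply]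
  | succ k ih =>
    intro j l
    show (⨆ m, maxPow A k j m * A m l) ≤ _
    rw [pow_succ, Matrix.mul_apply]
    refine ciSup_le fun m => ?_
    calc maxPow A k j m * A m l ≤ (A ^ k) j m * A m l :=
          mul_le_mul_of_nonneg_right (ih j m) (hA m l)
      _ ≤ ∑ m', (A ^ k) j m' * A m' l := by
          refine Finset.single_le_sum (fun m' _ => mul_nonneg (pow_entry_nonneg hA k j m') (hA m' l))
            (Finset.mem_univ m)

private lemma maxPow_one (hA : ∀ i j, 0 ≤ A i j) (j l : Fin n) : maxPow A 1 j l = A j l := by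
  show (⨆ m, maxPow A 0 j m * A m l) = A j l
  refine le_antisymm (ciSup_le fun m => ?_) ?_
  · simp only [maxPow]
    split
    · next h => subst h; rw [one_mul]
    · rw [zero_mul]; exact hA j l
  · have := le_ciSup (f := fun m => maxPow A 0 j m * A m l) bdd j
    simpa [maxPow] using this

private lemma pow_le_maxPow (hA : ∀ i j, 0 ≤ A i j) :
    ∀ k j l, (A ^ (k + 1)) j l ≤ (n : ℝ) ^ k * maxPow A (k + 1) j l := by
  intro k
  induction k with
  | zero =>
    intro j l
    rw [pow_one, pow_zero, one_mul, maxPow_one hA]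
  | succ k ih =>
    intro j l
    rw [pow_succ, Matrix.mul_apply]
    have hstep : ∀ m : Fin n, (A ^ (k+1)) j m * A m l ≤ (n : ℝ) ^ k * maxPow A (k + 2) j l := by
      intro m
      have h1 : (A ^ (k+1)) j m * A m l ≤ (n : ℝ) ^ k * (maxPow A (k+1) j m * A m l) := by
        rw [← mul_assoc]
        exact mul_le_mul_of_nonneg_right (ih j m) (hA m l)
      refine h1.trans (mul_le_mul_of_nonneg_left ?_ (by positivity))
      exact le_ciSup (f := fun m => maxPow A (k+1) j m * A m l) bdd m
    calc ∑ m, (A ^ (k+1)) j m * A m l ≤ ∑ _m : Fin n, (n : ℝ) ^ k * maxPow A (k + 2) j l :=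
          Finset.sum_le_sum fun m _ => hstep m
      _ = (n : ℝ) ^ (k + 1) * maxPow A (k + 2) j l := by
          rw [Finset.sum_const, Finset.card_univ, Fintype.card_fin, nsmul_eq_mul, pow_succ]
          ring

private lemma entry_le_matNorm (j l : Fin n) : A j l ≤ matNorm A :=
  le_trans (le_ciSup (f := fun l => A j l) bdd l) (le_ciSup (f := fun j => ⨆ l, A j l) bdd j)

private lemma matNorm_nonneg (hA : ∀ i j, 0 ≤ A i j) (j l : Fin n) : 0 ≤ matNorm A :=
  le_trans (hA j l) (entry_le_matNorm j l)

private lemma pow_entry_le (hA : ∀ i j, 0 ≤ A i j) :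
    ∀ k j l, (A ^ k) j l ≤ ((n : ℝ) * matNorm A) ^ k := by
  intro k
  induction k with
  | zero =>
    intro j l
    rw [pow_zero, pow_zero, Matrix.one_apply]; split <;> norm_num
  | succ k ih =>
    intro j l
    have hM : 0 ≤ matNorm A := matNorm_nonneg hA j l
    rw [pow_succ, Matrix.mul_apply]
    calc ∑ m, (A ^ k) j m * A m l ≤ ∑ _m : Fin n, ((n : ℝ) * matNorm A) ^ k * matNorm A :=
          Finset.sum_le_sum fun m _ =>
            mul_le_mul (ih j m) (entry_le_matNorm m l) (hA m l) (by positivity)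
      _ = ((n : ℝ) * matNorm A) ^ (k + 1) := by
          rw [Finset.sum_const, Finset.card_univ, Fintype.card_fin, nsmul_eq_mul, pow_succ]
          ring

private lemma maxVecMul_e {B : Matrix (Fin n) (Fin n) ℝ} (hB : ∀ j l, 0 ≤ B j l) (i j : Fin n) :
    maxVecMul B (e i) j = B j i := by
  show (⨆ l, B j l * e i l) = B j i
  refine le_antisymm (ciSup_le fun l => ?_) ?_
  · simp only [e]
    split
    · next h => subst h; rw [mul_one]
    · rw [mul_zero]; exact hB j i
  · have := le_ciSup (f := fun l => B j l * e i l) bdd i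
    simpa [e] using this

private lemma mulVec_e (B : Matrix (Fin n) (Fin n) ℝ) (i j : Fin n) :
    B.mulVec (e i) j = B j i := by
  simp [Matrix.mulVec, dotProduct, e, mul_ite, mul_one, mul_zero]

private lemma rpow_pow_inv {x : ℝ} (hx : 0 ≤ x) {k : ℕ} (hk : k ≠ 0) :
    (x ^ k) ^ ((k : ℝ)⁻¹) = x := by
  rw [← Real.rpow_natCast x k, ← Real.rpow_mul hx,
    mul_inv_cancel₀ (by exact_mod_cast hk), Real.rpow_one]

end auxlem

/-- `r_{e_i}(A) ≤ ρ_{e_i}(A) ≤ n · r_{e_i}(A)`. -/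
theorem stmt1 {n : ℕ} (A : Matrix (Fin n) (Fin n) ℝ) (hA : ∀ i j, 0 ≤ A i j)
    (i : Fin n) :
    rloc A (e i) ≤ rhox A (e i) ∧ rhox A (e i) ≤ (n : ℝ) * rloc A (e i) := by
  haveI : Nonempty (Fin n) := ⟨i⟩
  have hn : 1 ≤ (n : ℝ) := by exact_mod_cast i.pos
  set M : ℝ := (n : ℝ) * matNorm A with hMdef
  have hM0 : 0 ≤ matNorm A := matNorm_nonneg hA i i
  have hMn : 0 ≤ M := by positivity
  set a : ℕ → ℝ := fun k => (vnorm (maxVecMul (maxPow A k) (e i))) ^ ((k : ℝ)⁻¹) with ha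
  set b : ℕ → ℝ := fun k => (vnorm ((A ^ k).mulVec (e i))) ^ ((k : ℝ)⁻¹) with hb
  -- identification of the vector norms
  have hveq : ∀ k, vnorm (maxVecMul (maxPow A k) (e i)) = ⨆ j, maxPow A k j i := by
    intro k
    unfold vnorm
    congr 1
    funext j
    exact maxVecMul_e (maxPow_nonneg hA k) i j
  have hweq : ∀ k, vnorm ((A ^ k).mulVec (e i)) = ⨆ j, (A ^ k) j i := by
    intro k
    unfold vnorm
    congr 1
    funext j
    exact mulVec_e _ i j
  have hv0 : ∀ k, 0 ≤ vnorm (maxVecMul (maxPow A k) (e i)) := by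
    intro k
    rw [hveq k]
    exact le_trans (maxPow_nonneg hA k i i) (le_ciSup (f := fun j => maxPow A k j i) bdd i)
  have hw0 : ∀ k, 0 ≤ vnorm ((A ^ k).mulVec (e i)) := by
    intro k
    rw [hweq k]
    exact le_trans (pow_entry_nonneg hA k i i) (le_ciSup (f := fun j => (A ^ k) j i) bdd i)
  have hvw : ∀ k, vnorm (maxVecMul (maxPow A k) (e i)) ≤ vnorm ((A ^ k).mulVec (e i)) := by
    intro k
    rw [hveq k, hweq k]
    exact ciSup_mono bdd fun j => maxPow_le_pow hA k j i
  -- a ≤ b pointwise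
  have hab : ∀ k, a k ≤ b k := fun k =>
    Real.rpow_le_rpow (hv0 k) (hvw k) (by positivity)
  -- b bounded above by max 1 M
  have hbbd : ∀ k, b k ≤ max 1 M := by
    intro k
    rcases Nat.eq_zero_or_pos k with hk | hk
    · subst hk
      simp only [hb, Nat.cast_zero, inv_zero, Real.rpow_zero]
      exact le_max_left _ _
    · have hk0 : k ≠ 0 := hk.ne'
      have h1 : vnorm ((A ^ k).mulVec (e i)) ≤ M ^ k := by
        rw [hweq k]
        exact ciSup_le fun j => pow_entry_le hA k j i
      calc b k ≤ (M ^ k) ^ ((k : ℝ)⁻¹) :=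
            Real.rpow_le_rpow (hw0 k) h1 (by positivity)
        _ = M := rpow_pow_inv hMn hk0
        _ ≤ max 1 M := le_max_right _ _
  have habd : ∀ k, a k ≤ max 1 M := fun k => (hab k).trans (hbbd k)
  have ha0 : ∀ k, 0 ≤ a k := fun k => Real.rpow_nonneg (hv0 k) _
  have hb0 : ∀ k, 0 ≤ b k := fun k => Real.rpow_nonneg (hw0 k) _
  -- b ≤ n * a eventually
  have hba : ∀ k, 1 ≤ k → b k ≤ (n : ℝ) * a k := by
    intro k hk
    have hk0 : k ≠ 0 := by omega
    have h1 : vnorm ((A ^ k).mulVec (e i)) ≤ (n : ℝ) ^ k * vnorm (maxVecMul (maxPow A k) (e i)) := by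
      rw [hweq k, hveq k]
      refine ciSup_le fun j => ?_
      obtain ⟨k', rfl⟩ : ∃ k', k = k' + 1 := ⟨k - 1, by omega⟩
      calc (A ^ (k' + 1)) j i ≤ (n : ℝ) ^ k' * maxPow A (k' + 1) j i := pow_le_maxPow hA k' j i
        _ ≤ (n : ℝ) ^ (k' + 1) * maxPow A (k' + 1) j i := by
            refine mul_le_mul_of_nonneg_right ?_ (maxPow_nonneg hA _ j i)
            exact pow_le_pow_right₀ hn (by omega)
        _ ≤ (n : ℝ) ^ (k' + 1) * ⨆ j', maxPow A (k' + 1) j' i := by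
            refine mul_le_mul_of_nonneg_left (le_ciSup (f := fun j' => maxPow A (k' + 1) j' i) bdd j) (by positivity)
    calc b k ≤ ((n : ℝ) ^ k * vnorm (maxVecMul (maxPow A k) (e i))) ^ ((k : ℝ)⁻¹) :=
          Real.rpow_le_rpow (hw0 k) h1 (by positivity)
      _ = ((n : ℝ) ^ k) ^ ((k : ℝ)⁻¹) * a k := by
          rw [Real.mul_rpow (by positivity) (hv0 k)]
      _ = (n : ℝ) * a k := by rw [rpow_pow_inv (by positivity) hk0]
  -- limsup facts
  have hacob : atTop.IsCoboundedUnder (· ≤ ·) a :=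
    isCoboundedUnder_le_of_le atTop ha0
  have hbcob : atTop.IsCoboundedUnder (· ≤ ·) b :=
    isCoboundedUnder_le_of_le atTop hb0
  have habdd : atTop.IsBoundedUnder (· ≤ ·) a := isBoundedUnder_of ⟨max 1 M, habd⟩
  have hbbdd : atTop.IsBoundedUnder (· ≤ ·) b := isBoundedUnder_of ⟨max 1 M, hbbd⟩
  have hnabdd : atTop.IsBoundedUnder (· ≤ ·) (fun k => (n : ℝ) * a k) :=
    isBoundedUnder_of ⟨(n : ℝ) * max 1 M, fun k =>
      mul_le_mul_of_nonneg_left (habd k) (by positivity)⟩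
  constructor
  · exact limsup_le_limsup (Eventually.of_forall hab) hacob hbbdd
  · have h1 : rhox A (e i) ≤ atTop.limsup (fun k => (n : ℝ) * a k) := by
      refine limsup_le_limsup ?_ hbcob hnabdd
      filter_upwards [eventually_ge_atTop 1] with k hk
      exact hba k hk
    have h2 : atTop.limsup (fun k => (n : ℝ) * a k) = (n : ℝ) * rloc A (e i) := by
      have hmono : Monotone (fun x : ℝ => (n : ℝ) * x) := fun x y hxy =>
        mul_le_mul_of_nonneg_left hxy (by positivity)
      have hcont : ContinuousAt (fun x : ℝ => (n : ℝ) * x) (atTop.limsup a) :=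
        (continuous_const.mul continuous_id).continuousAt
      exact (hmono.map_limsup_of_continuousAt a hcont habdd hacob).symm
    exact h1.trans_eq h2
end

section
/- For any nonnegative n×n matrix A and index i, r_{e_i}(A) = lim_{k→∞} ρ_{e_i}(A^k_⊗)^{1/k} = inf_{k∈ℕ} ρ_{e_i}(A^k_⊗)^{1/k} = sup_{k∈ℕ} (n^{-1} ρ_{e_i}(A^k_⊗))^{1/k}, where A^k_⊗ is the k-th max-algebra power. -/
open Filter Finset

namespace S5
open Filter Finset
set_option linter.unusedSectionVars false

variable {n : ℕ}

lemma bddA (f : Fin n → ℝ) : BddAbove (Set.range f) := Finite.bddAbove_range f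

lemma csup_le [Nonempty (Fin n)] {f : Fin n → ℝ} {a : ℝ} (h : ∀ s, f s ≤ a) :
    (⨆ s, f s) ≤ a := ciSup_le h

lemma le_csup (f : Fin n → ℝ) (s : Fin n) : f s ≤ ⨆ l, f l := le_ciSup (bddA f) s

lemma csup_nonneg [Nonempty (Fin n)] {f : Fin n → ℝ} (h : ∀ s, 0 ≤ f s) : 0 ≤ ⨆ s, f s :=
  le_trans (h (Classical.arbitrary _)) (le_csup f _)

lemma csup_attained [Nonempty (Fin n)] (f : Fin n → ℝ) : ∃ s, (⨆ l, f l) = f s := by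
  obtain ⟨s, hs⟩ := Finite.exists_max f
  exact ⟨s, le_antisymm (ciSup_le hs) (le_csup f s)⟩

section fixedA
variable [Nonempty (Fin n)] {A : Matrix (Fin n) (Fin n) ℝ} (hA : ∀ i j, 0 ≤ A i j)
include hA

omit hA in
lemma maxPow_succ_apply (m : ℕ) (l j : Fin n) :
    maxPow A (m + 1) l j = ⨆ s, maxPow A m l s * A s j := rfl

lemma maxPow_nonneg : ∀ m (l j : Fin n), 0 ≤ maxPow A m l j := by
  intro m
  induction m with
  | zero => intro l j; simp only [maxPow]; positivity
  | succ m ih =>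
      intro l j
      rw [maxPow_succ_apply]
      exact csup_nonneg fun s => mul_nonneg (ih l s) (hA s j)

omit hA in
lemma le_matNorm (l j : Fin n) : A l j ≤ matNorm A :=
  le_trans (le_csup (fun s => A l s) j) (le_csup (fun r => ⨆ s, A r s) l)

lemma matNorm_nonneg : 0 ≤ matNorm A :=
  le_trans (hA (Classical.arbitrary _) (Classical.arbitrary _)) (le_matNorm _ _)

/-- weights of walks -/
noncomputable def wt (A : Matrix (Fin n) (Fin n) ℝ) (f : ℕ → Fin n) (m : ℕ) : ℝ :=
  ∏ t ∈ Finset.range m, A (f t) (f (t + 1))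

omit hA in
lemma wt_zero (f : ℕ → Fin n) : wt A f 0 = 1 := by simp [wt]

omit hA in
lemma wt_succ (f : ℕ → Fin n) (m : ℕ) :
    wt A f (m + 1) = wt A f m * A (f m) (f (m + 1)) := Finset.prod_range_succ _ _

lemma wt_nonneg (f : ℕ → Fin n) (m : ℕ) : 0 ≤ wt A f m :=
  Finset.prod_nonneg fun t _ => hA _ _

omit hA in
lemma wt_congr {f g : ℕ → Fin n} {m : ℕ} (h : ∀ t ≤ m, f t = g t) : wt A f m = wt A g m := by
  refine Finset.prod_congr rfl fun t ht => ?_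
  have ht' := Finset.mem_range.mp ht
  rw [h t (le_of_lt ht'), h (t + 1) ht']

omit hA in
lemma wt_add (f : ℕ → Fin n) (a b : ℕ) :
    wt A f (a + b) = wt A f a * wt A (fun t => f (a + t)) b := by
  simp only [wt, Finset.prod_range_add, Nat.add_assoc]

lemma wt_le_maxPow (f : ℕ → Fin n) : ∀ m, wt A f m ≤ maxPow A m (f 0) (f m) := by
  intro m
  induction m with
  | zero => simp [wt_zero, maxPow]
  | succ m ih =>
      rw [wt_succ, maxPow_succ_apply]
      calc wt A f m * A (f m) (f (m + 1))
          ≤ maxPow A m (f 0) (f m) * A (f m) (f (m + 1)) :=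
            mul_le_mul_of_nonneg_right ih (hA _ _)
        _ ≤ ⨆ s, maxPow A m (f 0) s * A s (f (m + 1)) :=
            le_csup (fun s => maxPow A m (f 0) s * A s (f (m + 1))) (f m)

lemma exists_walk : ∀ (m : ℕ) (l j : Fin n),
    maxPow A m l j ≤ 0 ∨
      ∃ f : ℕ → Fin n, f 0 = l ∧ f m = j ∧ wt A f m = maxPow A m l j := by
  intro m
  induction m with
  | zero =>
      intro l j
      by_cases h : l = j
      · exact Or.inr ⟨fun _ => l, rfl, by simp [h], by simp [wt_zero, maxPow, h]⟩
      · simp [maxPow, h]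
  | succ m ih =>
      intro l j
      obtain ⟨s₀, hs₀⟩ := csup_attained (fun s => maxPow A m l s * A s j)
      rw [maxPow_succ_apply, hs₀]
      rcases ih l s₀ with h | ⟨f, hf0, hfm, hw⟩
      · exact Or.inl (mul_nonpos_of_nonpos_of_nonneg h (hA s₀ j))
      · refine Or.inr ⟨fun t => if t ≤ m then f t else j, by simp [hf0], by simp, ?_⟩
        rw [wt_succ]
        have h1 : wt A (fun t => if t ≤ m then f t else j) m = wt A f m := by
          refine wt_congr fun t ht => by simp [ht]
        rw [h1, hw]
        simp [hfm]

lemma factor_pos {f : ℕ → Fin n} {m : ℕ} (h : 0 < wt A f m) :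
    ∀ t < m, 0 < A (f t) (f (t + 1)) := by
  intro t ht
  rcases lt_or_eq_of_le (hA (f t) (f (t + 1))) with h' | h'
  · exact h'
  · exfalso
    have : wt A f m = 0 := Finset.prod_eq_zero (Finset.mem_range.mpr ht) h'.symm
    rw [this] at h; exact lt_irrefl 0 h

end fixedA
end S5
namespace S5
open Filter Finset

variable {n : ℕ}

section fixedA2
variable [Nonempty (Fin n)] {A B C : Matrix (Fin n) (Fin n) ℝ}

lemma maxMul_apply (l j : Fin n) : maxMul A B l j = ⨆ s, A l s * B s j := rfl

lemma maxMul_assoc (hA : ∀ i j, 0 ≤ A i j) (hB : ∀ i j, 0 ≤ B i j) (hC : ∀ i j, 0 ≤ C i j) :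
    maxMul (maxMul A B) C = maxMul A (maxMul B C) := by
  funext l j
  apply le_antisymm
  · refine csup_le fun s => ?_
    obtain ⟨t₀, ht₀⟩ := csup_attained (fun t => A l t * B t s)
    rw [maxMul_apply, ht₀, mul_assoc]
    calc A l t₀ * (B t₀ s * C s j) ≤ A l t₀ * maxMul B C t₀ j :=
          mul_le_mul_of_nonneg_left (le_csup (fun s' => B t₀ s' * C s' j) s) (hA l t₀)
      _ ≤ _ := le_csup (fun t => A l t * maxMul B C t j) t₀
  · refine csup_le fun t => ?_
    obtain ⟨s₀, hs₀⟩ := csup_attained (fun s => B t s * C s j)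
    rw [maxMul_apply, hs₀, ← mul_assoc]
    calc A l t * B t s₀ * C s₀ j ≤ maxMul A B l s₀ * C s₀ j :=
          mul_le_mul_of_nonneg_right (le_csup (fun t' => A l t' * B t' s₀) t) (hC s₀ j)
      _ ≤ _ := le_csup (fun s => maxMul A B l s * C s j) s₀

variable (hA : ∀ i j, 0 ≤ A i j)
include hA

lemma maxMul_nonneg (hB : ∀ i j, 0 ≤ B i j) : ∀ l j, 0 ≤ maxMul A B l j := fun l j =>
  csup_nonneg fun s => mul_nonneg (hA l s) (hB s j)

lemma maxMul_id : maxMul A (maxPow A 0) = A := by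
  funext l j
  apply le_antisymm
  · refine csup_le fun s => ?_
    by_cases h : s = j
    · subst h; simp [maxPow]
    · simp only [maxPow, if_neg h, mul_zero]; exact hA l j
  · have h := le_csup (fun s => A l s * maxPow A 0 s j) j
    rw [show maxPow A 0 j j = 1 by simp [maxPow], mul_one] at h
    exact h

lemma maxPow_one_eq : maxPow A 1 = A := by
  funext l j
  show maxMul (maxPow A 0) A l j = A l j
  apply le_antisymm
  · refine csup_le fun s => ?_
    by_cases h : l = s
    · subst h; simp [maxPow]
    · simp only [maxPow, if_neg h, zero_mul]; exact hA l j
  · have h := le_csup (fun s => maxPow A 0 l s * A s j) l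
    rw [show maxPow A 0 l l = 1 by simp [maxPow], one_mul] at h
    exact h

lemma maxPow_add : ∀ a b, maxPow A (a + b) = maxMul (maxPow A a) (maxPow A b) := by
  intro a b
  induction b with
  | zero => exact (maxMul_id (maxPow_nonneg hA a)).symm
  | succ b ih =>
      have : a + (b + 1) = (a + b) + 1 := by omega
      rw [this]
      show maxMul (maxPow A (a + b)) A = _
      rw [ih, maxMul_assoc (maxPow_nonneg hA a) (maxPow_nonneg hA b) hA]
      rfl

lemma maxPow_mul : ∀ m, maxPow (maxPow A k) m = maxPow A (k * m) := by
  intro m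
  induction m with
  | zero => rw [Nat.mul_zero]; rfl
  | succ m ih =>
      show maxMul (maxPow (maxPow A k) m) (maxPow A k) = _
      rw [ih, ← maxPow_add hA, Nat.mul_succ]

lemma matNorm_maxPow_le : ∀ m, matNorm (maxPow A m) ≤ (max 1 (matNorm A)) ^ m := by
  intro m
  induction m with
  | zero =>
      refine csup_le fun l => csup_le fun j => ?_
      simp only [maxPow, pow_zero]
      split <;> simp
  | succ m ih =>
      refine csup_le fun l => csup_le fun j => ?_
      rw [maxPow_succ_apply]
      refine csup_le fun s => ?_
      calc maxPow A m l s * A s j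
          ≤ (max 1 (matNorm A)) ^ m * max 1 (matNorm A) := by
            refine mul_le_mul ?_ ?_ (hA s j) (by positivity)
            · exact le_trans (le_trans (le_csup _ s) (le_csup (fun r => ⨆ s', maxPow A m r s') l)) ih
            · exact le_trans (le_matNorm s j) (le_max_right 1 (matNorm A))
        _ = (max 1 (matNorm A)) ^ (m + 1) := (pow_succ _ m).symm

end fixedA2
end S5
namespace S5
open Filter Finset

variable {n : ℕ}

/-- max over `l` of the `i`-th column of the `m`-th max-power. -/
noncomputable def colMax (A : Matrix (Fin n) (Fin n) ℝ) (i : Fin n) (m : ℕ) : ℝ := ⨆ l, maxPow A m l i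

/-- the set of `k`-th roots of diagonal entries of max powers, at indices from which `i`
is reachable with positive weight. -/
def SS (A : Matrix (Fin n) (Fin n) ℝ) (i : Fin n) : Set ℝ :=
  {x | ∃ j k q, 1 ≤ k ∧ 0 < maxPow A q j i ∧ x = (maxPow A k j j) ^ ((k : ℝ)⁻¹)}

/-- the max cycle-mean over cycles from which `i` is reachable. -/
noncomputable def mu (A : Matrix (Fin n) (Fin n) ℝ) (i : Fin n) : ℝ := sSup (SS A i)

section main
variable [Nonempty (Fin n)] {A : Matrix (Fin n) (Fin n) ℝ} (hA : ∀ i j, 0 ≤ A i j) (i : Fin n)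
include hA

lemma SS_nonempty : (SS A i).Nonempty := by
  refine ⟨(maxPow A 1 i i) ^ ((1 : ℝ)⁻¹), i, 1, 0, le_refl 1, ?_, by norm_num⟩
  simp [maxPow]

lemma SS_le {x : ℝ} (hx : x ∈ SS A i) : x ≤ max 1 (matNorm A) := by
  obtain ⟨j, k, q, hk, hq, rfl⟩ := hx
  have hk0 : (k : ℕ) ≠ 0 := by omega
  have h1 : maxPow A k j j ≤ (max 1 (matNorm A)) ^ k :=
    le_trans (le_trans (le_csup _ j) (le_csup (fun r => ⨆ s, maxPow A k r s) j))
      (matNorm_maxPow_le hA k)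
  calc (maxPow A k j j) ^ ((k:ℝ)⁻¹)
      ≤ ((max 1 (matNorm A)) ^ k) ^ ((k:ℝ)⁻¹) :=
        Real.rpow_le_rpow (maxPow_nonneg hA k j j) h1 (by positivity)
    _ = max 1 (matNorm A) := Real.pow_rpow_inv_natCast (by positivity) hk0

lemma SS_bdd : BddAbove (SS A i) := ⟨max 1 (matNorm A), fun _ hx => SS_le hA i hx⟩

lemma mu_nonneg : 0 ≤ mu A i := by
  obtain ⟨x, hx⟩ := SS_nonempty hA i
  have hx0 : 0 ≤ x := by
    obtain ⟨j, k, q, hk, hq, rfl⟩ := hx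
    exact Real.rpow_nonneg (maxPow_nonneg hA k j j) _
  exact le_trans hx0 (le_csSup (SS_bdd hA i) hx)

lemma mu_le : mu A i ≤ max 1 (matNorm A) :=
  csSup_le (SS_nonempty hA i) fun _ hx => SS_le hA i hx

lemma mu_pow_ge {j : Fin n} {k q : ℕ} (hk : 1 ≤ k) (hq : 0 < maxPow A q j i) :
    maxPow A k j j ≤ (mu A i) ^ k := by
  have hmem : (maxPow A k j j) ^ ((k : ℝ)⁻¹) ∈ SS A i := ⟨j, k, q, hk, hq, rfl⟩
  have h1 : (maxPow A k j j) ^ ((k : ℝ)⁻¹) ≤ mu A i := le_csSup (SS_bdd hA i) hmem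
  have hk0 : k ≠ 0 := by omega
  calc maxPow A k j j = ((maxPow A k j j) ^ ((k:ℝ)⁻¹)) ^ k :=
        (Real.rpow_inv_natCast_pow (maxPow_nonneg hA k j j) hk0).symm
    _ ≤ (mu A i) ^ k := pow_le_pow_left₀ (Real.rpow_nonneg (maxPow_nonneg hA k j j) _) h1 k

/-- the master constant -/
lemma wt_upper (hn : 0 < n) :
    ∀ m (f : ℕ → Fin n), f m = i →
      wt A f m ≤ (max (max 1 (matNorm A)) (mu A i)) ^ (min m n) * (mu A i) ^ (m - n) := by
  set K := max (max 1 (matNorm A)) (mu A i) with hK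
  have hK1 : (1:ℝ) ≤ K := le_trans (le_max_left 1 _) (le_max_left _ _)
  have hK0 : (0:ℝ) ≤ K := le_trans zero_le_one hK1
  have hmu0 : 0 ≤ mu A i := mu_nonneg hA i
  have hmuK : mu A i ≤ K := le_max_right _ _
  have hAK : ∀ l j, A l j ≤ K :=
    fun l j => le_trans (le_matNorm l j) (le_trans (le_max_right 1 _) (le_max_left _ _))
  intro m
  induction m using Nat.strong_induction_on with
  | _ m ih =>
    intro f hf
    by_cases hmn : m ≤ n
    · -- short walk: product of entries bounded by K
      have h1 : wt A f m ≤ K ^ m := by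
        calc wt A f m ≤ ∏ _t ∈ Finset.range m, K :=
              Finset.prod_le_prod (fun t _ => hA _ _) (fun t _ => hAK _ _)
          _ = K ^ m := by rw [Finset.prod_const, Finset.card_range]
      have h2 : min m n = m := Nat.min_eq_left hmn
      have h3 : m - n = 0 := by omega
      rw [h2, h3, pow_zero, mul_one]
      exact h1
    · push_neg at hmn
      -- long walk: pigeonhole a repeated vertex among the first n+1
      have key : ∀ a b : ℕ, a < b → b ≤ n → f a = f b →
          wt A f m ≤ K ^ (min m n) * (mu A i) ^ (m - n) := by
        intro a b hab hbn hfab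
        have hbm : b ≤ m := le_trans hbn (le_of_lt hmn)
        have e1 : m = b + (m - b) := by omega
        have e2 : b = a + (b - a) := by omega
        have hsplit1 : wt A f m = wt A f b * wt A (fun t => f (b + t)) (m - b) := by
          conv_lhs => rw [e1]
          exact wt_add f b (m - b)
        have hsplit2 : wt A f b = wt A f a * wt A (fun t => f (a + t)) (b - a) := by
          conv_lhs => rw [e2]
          exact wt_add f a (b - a)
        set X := wt A f a with hX
        set Y := wt A (fun t => f (a + t)) (b - a) with hYdef
        set Z := wt A (fun t => f (b + t)) (m - b) with hZdef
        rcases le_or_gt (wt A f m) 0 with h0 | h0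
        · exact le_trans h0 (mul_nonneg (pow_nonneg hK0 _) (pow_nonneg hmu0 _))
        · have hXnn : 0 ≤ X := wt_nonneg hA f a
          have hYnn : 0 ≤ Y := wt_nonneg hA _ _
          have hZnn : 0 ≤ Z := wt_nonneg hA _ _
          have hZpos : 0 < Z := by
            rcases lt_or_eq_of_le hZnn with h | h
            · exact h
            · exfalso; rw [hsplit1, hsplit2, ← h, mul_zero] at h0; exact lt_irrefl 0 h0
          -- reachability of f b = f a
          have hreach : 0 < maxPow A (m - b) (f b) i := by
            have h' := wt_le_maxPow hA (fun t => f (b + t)) (m - b)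
            simp only [Nat.add_zero] at h'
            rw [show b + (m - b) = m by omega, hf] at h'
            exact lt_of_lt_of_le hZpos h'
          -- the closed part is bounded by mu ^ (b - a)
          have hY : Y ≤ (mu A i) ^ (b - a) := by
            have h' := wt_le_maxPow hA (fun t => f (a + t)) (b - a)
            simp only [Nat.add_zero] at h'
            rw [show a + (b - a) = b by omega, ← hfab] at h'
            exact le_trans h' (mu_pow_ge hA i (k := b - a) (q := m - b) (by omega)
              (by rw [hfab]; exact hreach))
          -- spliced walk
          set g : ℕ → Fin n := fun t => if t < a then f t else f (t + (b - a)) with hg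
          have hg1 : wt A g a = X := by
            refine wt_congr fun t ht => ?_
            by_cases h' : t < a
            · simp [hg, h']
            · have ht' : t = a := by omega
              rw [ht']
              show (if a < a then f a else f (a + (b - a))) = f a
              rw [if_neg (lt_irrefl a), show a + (b - a) = b by omega, ← hfab]
          have hg2 : ∀ t, g (a + t) = f (b + t) := by
            intro t
            simp only [hg, if_neg (by omega : ¬ a + t < a)]
            congr 1
            omega
          have hg3 : wt A (fun t => g (a + t)) (m - b) = Z := by
            refine wt_congr fun t _ => hg2 t
          have hgm : g (a + (m - b)) = i := by
            rw [hg2 (m - b), show b + (m - b) = m by omega, hf]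
          have hwg : wt A g (a + (m - b)) = X * Z := by rw [wt_add, hg1, hg3]
          have hm' : a + (m - b) < m := by omega
          have IH := ih (a + (m - b)) hm' g hgm
          have step : wt A f m ≤ (K ^ (min (a + (m - b)) n) * (mu A i) ^ ((a + (m - b)) - n))
              * (mu A i) ^ (b - a) := by
            calc wt A f m = (X * Z) * Y := by rw [hsplit1, hsplit2]; ring
              _ ≤ (X * Z) * (mu A i) ^ (b - a) :=
                  mul_le_mul_of_nonneg_left hY (mul_nonneg hXnn hZnn)
              _ = wt A g (a + (m - b)) * (mu A i) ^ (b - a) := by rw [hwg]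
              _ ≤ _ := mul_le_mul_of_nonneg_right IH (pow_nonneg hmu0 _)
          refine le_trans step ?_
          set m' := a + (m - b) with hm'd
          rcases le_or_gt n m' with hn' | hn'
          · have h2 : min m' n = n := Nat.min_eq_right hn'
            have h3 : min m n = n := Nat.min_eq_right (le_of_lt hmn)
            rw [h2, h3, mul_assoc, ← pow_add]
            have : m' - n + (b - a) = m - n := by omega
            rw [this]
          · have h2 : min m' n = m' := Nat.min_eq_left (le_of_lt hn')
            have h3 : min m n = n := Nat.min_eq_right (le_of_lt hmn)
            have h4 : m' - n = 0 := by omega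
            rw [h2, h3, h4, pow_zero, mul_one]
            have e5 : (mu A i) ^ (b - a) = (mu A i) ^ (m - n) * (mu A i) ^ (b - a - (m - n)) := by
              rw [← pow_add]; congr 1; omega
            have e6 : (mu A i) ^ (b - a - (m - n)) ≤ K ^ (b - a - (m - n)) :=
              pow_le_pow_left₀ hmu0 hmuK _
            have e7 : K ^ m' * K ^ (b - a - (m - n)) = K ^ n := by rw [← pow_add]; congr 1; omega
            calc K ^ m' * (mu A i) ^ (b - a)
                = (K ^ m' * (mu A i) ^ (b - a - (m - n))) * (mu A i) ^ (m - n) := by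
                  rw [e5]; ring
              _ ≤ (K ^ m' * K ^ (b - a - (m - n))) * (mu A i) ^ (m - n) :=
                  mul_le_mul_of_nonneg_right (mul_le_mul_of_nonneg_left e6 (pow_nonneg hK0 _))
                    (pow_nonneg hmu0 _)
              _ = K ^ n * (mu A i) ^ (m - n) := by rw [e7]
      -- find the repetition
      have hcard : Fintype.card (Fin n) < Fintype.card (Fin (n + 1)) := by simp
      obtain ⟨a, b, hab, heq⟩ :=
        Fintype.exists_ne_map_eq_of_card_lt (fun t : Fin (n + 1) => f (t : ℕ)) hcard
      rcases lt_or_gt_of_ne hab with h' | h'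
      · exact key a b h' (by omega) heq
      · exact key b a h' (by omega) heq.symm

lemma colMax_upper (hn : 0 < n) (m : ℕ) :
    colMax A i m ≤ (max (max 1 (matNorm A)) (mu A i)) ^ (min m n) * (mu A i) ^ (m - n) := by
  refine csup_le fun l => ?_
  rcases exists_walk hA m l i with h | ⟨f, hf0, hfm, hw⟩
  · refine le_trans h (mul_nonneg (pow_nonneg ?_ _) (pow_nonneg (mu_nonneg hA i) _))
    positivity
  · rw [← hw]
    exact wt_upper hA i hn m f hfm

lemma colMax_nonneg (m : ℕ) : 0 ≤ colMax A i m :=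
  csup_nonneg fun l => maxPow_nonneg hA m l i

lemma colMax_le (m : ℕ) : colMax A i m ≤ (max 1 (matNorm A)) ^ m :=
  csup_le fun l =>
    le_trans (le_trans (le_csup _ i) (le_csup (fun r => ⨆ s, maxPow A m r s) l))
      (matNorm_maxPow_le hA m)

end main
end S5
namespace S5
open Filter Finset

variable {n : ℕ}

section lower
variable [Nonempty (Fin n)] {A : Matrix (Fin n) (Fin n) ℝ} (hA : ∀ i j, 0 ≤ A i j) (i : Fin n)
include hA

lemma colMax_lower {j : Fin n} {k q : ℕ} (hk : 1 ≤ k)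
    (hq : 0 < maxPow A q j i) (ht : 0 < maxPow A k j j) :
    ∃ C > 0, ∀ m, q ≤ m →
      C * ((maxPow A k j j) ^ ((k : ℝ)⁻¹)) ^ m ≤ colMax A i m := by
  set t := maxPow A k j j with htdef
  set w₀ := maxPow A q j i with hw₀def
  -- a closed walk of weight t at j
  rcases exists_walk hA k j j with h | ⟨g, hg0, hgk, hwg⟩
  · exact absurd ht (not_lt.mpr h)
  -- a path of weight w₀ from j to i
  rcases exists_walk hA q j i with h | ⟨w, hw0, hwq, hww⟩
  · exact absurd hq (not_lt.mpr h)
  have hfac : ∀ u < k, 0 < A (g u) (g (u + 1)) := factor_pos hA (by rw [hwg]; exact ht)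
  have hrne : (Finset.range k).Nonempty := Finset.nonempty_range_iff.mpr (by omega)
  set ε := Finset.inf' (Finset.range k) hrne (fun u => A (g u) (g (u + 1))) with hεdef
  have hε : 0 < ε := (Finset.lt_inf'_iff hrne).mpr fun u hu => hfac u (Finset.mem_range.mp hu)
  set ε' := min ε 1 with hε'def
  have hε'0 : 0 < ε' := lt_min hε one_pos
  have hε'1 : ε' ≤ 1 := min_le_right _ _
  -- the combinatorial estimate
  have comb : ∀ m, q ≤ m → ε' ^ k * t ^ ((m - q) / k) * w₀ ≤ colMax A i m := by
    intro m hm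
    set s := (m - q) % k with hsdef
    set r := (m - q) / k with hrdef
    have hsk : s < k := Nat.mod_lt _ (by omega)
    have hm2 : m = s + k * r + q := by
      have h := Nat.div_add_mod (m - q) k
      rw [← hrdef, ← hsdef] at h
      omega
    set F : ℕ → Fin n := fun u =>
      if u < s then g (u + (k - s))
      else if u < s + k * r then g ((u - s) % k)
      else w (u - (s + k * r)) with hF
    have hF1 : ∀ u ≤ s, F u = g (u + (k - s)) := by
      intro u hu
      rcases lt_or_eq_of_le hu with h' | h'
      · show (if u < s then _ else _) = _
        rw [if_pos h']
      · subst h'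
        show (if s < s then _ else if s < s + k * r then _ else _) = _
        rw [if_neg (lt_irrefl s)]
        have hgoal : g (s + (k - s)) = j := by
          rw [show s + (k - s) = k by omega, hgk]
        by_cases hr0 : s < s + k * r
        · rw [if_pos hr0, hgoal, Nat.sub_self, Nat.zero_mod, hg0]
        · rw [if_neg hr0, hgoal, show s - (s + k * r) = 0 by omega, hw0]
    have hF2 : ∀ u ≤ k * r, F (s + u) = g (u % k) := by
      intro u hu
      rcases lt_or_eq_of_le hu with h' | h'
      · show (if s + u < s then _ else if s + u < s + k * r then _ else _) = _
        rw [if_neg (by omega), if_pos (by omega)]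
        have e : s + u - s = u := by omega
        rw [e]
      · show (if s + u < s then _ else if s + u < s + k * r then _ else _) = _
        rw [if_neg (by omega), if_neg (by omega), h', Nat.mul_mod_right]
        rw [show s + k * r - (s + k * r) = 0 by omega, hw0, hg0]
    have hF3 : ∀ u ≤ q, F (s + k * r + u) = w u := by
      intro u _
      show (if s + k * r + u < s then _ else if s + k * r + u < s + k * r then _ else _) = _
      rw [if_neg (by omega), if_neg (by omega)]
      congr 1
      omega
    -- piece 1
    have piece1 : ε' ^ k ≤ wt A F s := by
      have h1 : wt A F s = wt A (fun v => g (v + (k - s))) s := wt_congr hF1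
      rw [h1]
      calc ε' ^ k ≤ ε' ^ s := pow_le_pow_of_le_one (le_of_lt hε'0) hε'1 (le_of_lt hsk)
        _ = ∏ _u ∈ Finset.range s, ε' := by rw [Finset.prod_const, Finset.card_range]
        _ ≤ wt A (fun v => g (v + (k - s))) s := by
            refine Finset.prod_le_prod (fun _ _ => le_of_lt hε'0) fun u hu => ?_
            have hu' : u < s := Finset.mem_range.mp hu
            have e : u + 1 + (k - s) = (u + (k - s)) + 1 := by omega
            show ε' ≤ A (g (u + (k - s))) (g (u + 1 + (k - s)))
            rw [e]
            exact le_trans (min_le_left _ _)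
              (Finset.inf'_le _ (Finset.mem_range.mpr (by omega)))
    -- piece 2
    have hcyc : ∀ r', wt A (fun u => g (u % k)) (k * r') = t ^ r' := by
      intro r'
      induction r' with
      | zero => simp [wt_zero]
      | succ r' ih =>
          have e : k * (r' + 1) = k * r' + k := by ring
          rw [e, wt_add, ih, pow_succ]
          congr 1
          have h1 : wt A (fun u => g ((k * r' + u) % k)) k = wt A (fun u => g (u % k)) k :=
            wt_congr fun u _ => by rw [Nat.mul_add_mod]
          have h2 : wt A (fun u => g (u % k)) k = wt A g k := by
            refine wt_congr fun u hu => ?_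
            rcases lt_or_eq_of_le hu with h' | h'
            · rw [Nat.mod_eq_of_lt h']
            · rw [h', Nat.mod_self, hg0, hgk]
          calc wt A (fun u => (fun v => g (v % k)) (k * r' + u)) k
              = wt A (fun u => g (u % k)) k := h1
            _ = wt A g k := h2
            _ = t := hwg
    have piece2 : wt A (fun u => F (s + u)) (k * r) = t ^ r := by
      rw [wt_congr hF2]
      exact hcyc r
    -- piece 3
    have piece3 : wt A (fun u => F (s + k * r + u)) q = w₀ := by
      rw [wt_congr hF3]
      exact hww
    have hFm : F m = i := by
      have h1 : F (s + k * r + q) = w q := hF3 q (le_refl q)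
      rw [hm2, h1, hwq]
    have total : wt A F m
        = wt A F s * wt A (fun u => F (s + u)) (k * r) * wt A (fun u => F (s + k * r + u)) q := by
      conv_lhs => rw [hm2]
      rw [wt_add F (s + k * r) q, wt_add F s (k * r)]
    have hwtF : ε' ^ k * t ^ r * w₀ ≤ wt A F m := by
      rw [total, piece2, piece3]
      refine mul_le_mul_of_nonneg_right (mul_le_mul_of_nonneg_right piece1 ?_) ?_
      · exact pow_nonneg (le_of_lt ht) r
      · exact le_of_lt hq
    calc ε' ^ k * t ^ r * w₀ ≤ wt A F m := hwtF
      _ ≤ maxPow A m (F 0) (F m) := wt_le_maxPow hA F m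
      _ = maxPow A m (F 0) i := by rw [hFm]
      _ ≤ colMax A i m := le_csup (fun l => maxPow A m l i) (F 0)
  -- analytic part
  have hk0R : (k : ℝ) ≠ 0 := by positivity
  set M := max 1 (t ^ (((q + k : ℕ) : ℝ) / k)) with hMdef
  have hM1 : (1 : ℝ) ≤ M := le_max_left _ _
  have hM0 : (0 : ℝ) < M := lt_of_lt_of_le one_pos hM1
  refine ⟨ε' ^ k * w₀ / M, by positivity, ?_⟩
  intro m hm
  have hxm : (t ^ ((k : ℝ)⁻¹)) ^ m ≤ t ^ ((m - q) / k) * M := by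
    set r := (m - q) / k with hrdef
    set s := (m - q) % k with hsdef
    have hsk : s < k := Nat.mod_lt _ (by omega)
    have hm2 : m = s + k * r + q := by
      have h := Nat.div_add_mod (m - q) k
      rw [← hrdef, ← hsdef] at h
      omega
    have e1 : (t ^ ((k : ℝ)⁻¹)) ^ m = t ^ ((k : ℝ)⁻¹ * m) := by
      rw [← Real.rpow_natCast (t ^ ((k : ℝ)⁻¹)) m, ← Real.rpow_mul (le_of_lt ht)]
    have e2 : (k : ℝ)⁻¹ * m = (r : ℝ) + ((s + q : ℕ) : ℝ) / k := by
      have : (m : ℝ) = (s : ℝ) + (k : ℝ) * r + q := by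
        rw [hm2]; push_cast; ring
      rw [this]
      push_cast
      field_simp
      ring
    have e3 : t ^ ((r : ℝ) + ((s + q : ℕ) : ℝ) / k) = t ^ r * t ^ (((s + q : ℕ) : ℝ) / k) := by
      rw [Real.rpow_add ht, Real.rpow_natCast]
    have e4 : t ^ (((s + q : ℕ) : ℝ) / k) ≤ M := by
      rcases le_or_gt 1 t with h1t | h1t
      · refine le_trans (Real.rpow_le_rpow_of_exponent_le h1t ?_) (le_max_right _ _)
        rw [div_le_div_iff_of_pos_right (by positivity : (0:ℝ) < (k:ℝ))]
        have hskR : (s : ℝ) ≤ (k : ℝ) := by exact_mod_cast le_of_lt hsk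
        push_cast
        linarith
      · exact le_trans (Real.rpow_le_one (le_of_lt ht) (le_of_lt h1t) (by positivity))
          (le_max_left _ _)
    calc (t ^ ((k : ℝ)⁻¹)) ^ m = t ^ r * t ^ (((s + q : ℕ) : ℝ) / k) := by rw [e1, e2, e3]
      _ ≤ t ^ r * M := mul_le_mul_of_nonneg_left e4 (pow_nonneg (le_of_lt ht) r)
  have hcomb := comb m hm
  calc ε' ^ k * w₀ / M * (t ^ ((k : ℝ)⁻¹)) ^ m
      ≤ ε' ^ k * w₀ / M * (t ^ ((m - q) / k) * M) := by
        refine mul_le_mul_of_nonneg_left hxm (by positivity)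
    _ = ε' ^ k * t ^ ((m - q) / k) * w₀ := by field_simp
    _ ≤ colMax A i m := hcomb

end lower
end S5
namespace S5
open Filter Finset

lemma bdd_of_ev {u : ℕ → ℝ} {b : ℝ} (h : ∀ᶠ m in atTop, u m ≤ b) :
    Filter.IsBoundedUnder (· ≤ ·) atTop u := ⟨b, by simpa [Filter.eventually_map] using h⟩

lemma bddge_of_ev {u : ℕ → ℝ} {b : ℝ} (h : ∀ᶠ m in atTop, b ≤ u m) :
    Filter.IsBoundedUnder (· ≥ ·) atTop u := ⟨b, by simpa [Filter.eventually_map] using h⟩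

lemma tendsto_rpow_inv_one {C : ℝ} (hC : 0 < C) :
    Tendsto (fun m : ℕ => C ^ ((m : ℝ)⁻¹)) atTop (nhds 1) := by
  have h1 : Tendsto (fun m : ℕ => ((m : ℝ))⁻¹) atTop (nhds 0) :=
    tendsto_inv_atTop_zero.comp tendsto_natCast_atTop_atTop
  have h2 : Tendsto (fun m : ℕ => Real.exp (Real.log C * ((m : ℝ))⁻¹)) atTop (nhds 1) := by
    have h3 : Tendsto (fun m : ℕ => Real.log C * ((m : ℝ))⁻¹) atTop (nhds 0) := by
      simpa using h1.const_mul (Real.log C)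
    have := (Real.continuous_exp.tendsto 0).comp h3
    rw [Real.exp_zero] at this
    exact this
  refine h2.congr fun m => ?_
  rw [← Real.rpow_def_of_pos hC]

lemma tendsto_c_rpow {C x : ℝ} (hC : 0 < C) (hx : 0 ≤ x) :
    Tendsto (fun m : ℕ => (C * x ^ m) ^ ((m : ℝ)⁻¹)) atTop (nhds x) := by
  have h1 : Tendsto (fun m : ℕ => C ^ ((m : ℝ)⁻¹) * x) atTop (nhds x) := by
    simpa using (tendsto_rpow_inv_one hC).mul_const x
  refine h1.congr' ?_
  filter_upwards [eventually_ge_atTop 1] with m hm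
  rw [Real.mul_rpow (le_of_lt hC) (pow_nonneg hx m),
    Real.pow_rpow_inv_natCast hx (by omega)]

lemma helper_liminf {c : ℕ → ℝ} {x C : ℝ} (hx : 0 ≤ x) (hC : 0 < C)
    (h : ∀ᶠ m : ℕ in atTop, C * x ^ m ≤ c m)
    (hvb : Filter.IsBoundedUnder (· ≤ ·) atTop (fun m : ℕ => c m ^ ((m : ℝ)⁻¹))) :
    x ≤ atTop.liminf (fun m : ℕ => c m ^ ((m : ℝ)⁻¹)) := by
  have hu := tendsto_c_rpow hC hx
  have hle : ∀ᶠ m : ℕ in atTop, (C * x ^ m) ^ ((m : ℝ)⁻¹) ≤ c m ^ ((m : ℝ)⁻¹) := by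
    filter_upwards [h] with m hm
    exact Real.rpow_le_rpow (by positivity) hm (by positivity)
  calc x = atTop.liminf (fun m : ℕ => (C * x ^ m) ^ ((m : ℝ)⁻¹)) := (hu.liminf_eq).symm
    _ ≤ _ := liminf_le_liminf hle hu.isBoundedUnder_ge hvb.isCoboundedUnder_ge

lemma helper_limsup {c : ℕ → ℝ} {x C : ℝ} (hc : ∀ m, 0 ≤ c m) (hx : 0 ≤ x) (hC : 0 < C)
    (h : ∀ᶠ m : ℕ in atTop, c m ≤ C * x ^ m) :
    atTop.limsup (fun m : ℕ => c m ^ ((m : ℝ)⁻¹)) ≤ x := by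
  have hu := tendsto_c_rpow hC hx
  have hle : ∀ᶠ m : ℕ in atTop, c m ^ ((m : ℝ)⁻¹) ≤ (C * x ^ m) ^ ((m : ℝ)⁻¹) := by
    filter_upwards [h] with m hm
    exact Real.rpow_le_rpow (hc m) hm (by positivity)
  calc atTop.limsup (fun m : ℕ => c m ^ ((m : ℝ)⁻¹))
      ≤ atTop.limsup (fun m : ℕ => (C * x ^ m) ^ ((m : ℝ)⁻¹)) := by
        refine limsup_le_limsup hle ?_ hu.isBoundedUnder_le
        exact (bddge_of_ev (Eventually.of_forall fun m =>
          Real.rpow_nonneg (hc m) _)).isCoboundedUnder_le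
    _ = x := hu.limsup_eq

variable {n : ℕ}

section part1
variable [Nonempty (Fin n)] {A : Matrix (Fin n) (Fin n) ℝ} (hA : ∀ i j, 0 ≤ A i j) (i : Fin n)
include hA

lemma colMax_rpow_bdd :
    Filter.IsBoundedUnder (· ≤ ·) atTop (fun m => colMax A i m ^ ((m : ℝ)⁻¹)) := by
  refine bdd_of_ev (b := max 1 (matNorm A)) ?_
  filter_upwards [eventually_ge_atTop 1] with m hm
  calc colMax A i m ^ ((m : ℝ)⁻¹)
      ≤ ((max 1 (matNorm A)) ^ m) ^ ((m : ℝ)⁻¹) :=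
        Real.rpow_le_rpow (colMax_nonneg hA i m) (colMax_le hA i m) (by positivity)
    _ = max 1 (matNorm A) := Real.pow_rpow_inv_natCast (by positivity) (by omega)

lemma limsup_le_mu :
    atTop.limsup (fun m => colMax A i m ^ ((m : ℝ)⁻¹)) ≤ mu A i := by
  have hn : 0 < n := (Classical.arbitrary (Fin n)).pos
  rcases eq_or_lt_of_le (mu_nonneg hA i) with hmu0 | hmu0
  · have hev : ∀ᶠ m in atTop, colMax A i m ^ ((m : ℝ)⁻¹) = (0 : ℝ) := by
      filter_upwards [eventually_ge_atTop (n + 1)] with m hm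
      have h1 := colMax_upper hA i hn m
      rw [← hmu0, zero_pow (show m - n ≠ 0 by omega), mul_zero] at h1
      have h2 : colMax A i m = 0 := le_antisymm h1 (colMax_nonneg hA i m)
      rw [h2]
      exact Real.zero_rpow (by
        have : (1:ℝ) ≤ (m:ℝ) := by exact_mod_cast (by omega : 1 ≤ m)
        positivity)
    rw [Filter.limsup_congr hev, Filter.limsup_const, ← hmu0]
  · set K := max (max 1 (matNorm A)) (mu A i) with hK
    have hK1 : (1:ℝ) ≤ K := le_trans (le_max_left 1 _) (le_max_left _ _)
    have hKn : (0:ℝ) < K ^ n := by positivity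
    have hmun : (0:ℝ) < (mu A i) ^ n := by positivity
    refine helper_limsup (colMax_nonneg hA i) (le_of_lt hmu0)
      (C := K ^ n / (mu A i) ^ n) (by positivity) ?_
    filter_upwards [eventually_ge_atTop n] with m hm
    have h1 := colMax_upper hA i hn m
    rw [Nat.min_eq_right hm] at h1
    have h2 : (mu A i) ^ (m - n) = (mu A i) ^ m / (mu A i) ^ n := by
      rw [eq_div_iff (ne_of_gt hmun), ← pow_add]
      congr 1
      omega
    rw [h2] at h1
    calc colMax A i m ≤ K ^ n * ((mu A i) ^ m / (mu A i) ^ n) := h1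
      _ = K ^ n / (mu A i) ^ n * (mu A i) ^ m := by ring

lemma mu_le_liminf :
    mu A i ≤ atTop.liminf (fun m => colMax A i m ^ ((m : ℝ)⁻¹)) := by
  refine csSup_le (SS_nonempty hA i) fun x hx => ?_
  obtain ⟨j, k, q, hk, hq, rfl⟩ := hx
  rcases eq_or_lt_of_le (maxPow_nonneg hA k j j) with ht | ht
  · rw [← ht, Real.zero_rpow (by
      have : (1:ℝ) ≤ (k:ℝ) := by exact_mod_cast hk
      positivity)]
    refine helper_liminf (le_refl (0:ℝ)) one_pos ?_ (colMax_rpow_bdd hA i)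
    filter_upwards [eventually_ge_atTop 1] with m hm
    rw [zero_pow (by omega), mul_zero]
    exact colMax_nonneg hA i m
  · obtain ⟨C, hC, hineq⟩ := colMax_lower hA i hk hq ht
    refine helper_liminf (Real.rpow_nonneg (maxPow_nonneg hA k j j) _) hC ?_
      (colMax_rpow_bdd hA i)
    filter_upwards [eventually_ge_atTop q] with m hm
    exact hineq m hm

lemma tendsto_colMax_rpow :
    Tendsto (fun m => colMax A i m ^ ((m : ℝ)⁻¹)) atTop (nhds (mu A i)) := by
  refine tendsto_of_le_liminf_of_limsup_le (mu_le_liminf hA i) (limsup_le_mu hA i)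
    (colMax_rpow_bdd hA i) ?_
  exact bddge_of_ev (Eventually.of_forall fun m =>
    Real.rpow_nonneg (colMax_nonneg hA i m) _)

lemma maxVecMul_e {B : Matrix (Fin n) (Fin n) ℝ} (hB : ∀ l j, 0 ≤ B l j) (l : Fin n) :
    maxVecMul B (e i) l = B l i := by
  apply le_antisymm
  · refine csup_le fun s => ?_
    by_cases h : s = i
    · subst h; simp [e]
    · simp only [e, if_neg h, mul_zero]
      exact hB l i
  · calc B l i = B l i * e i i := by simp [e]
      _ ≤ ⨆ s, B l s * e i s := le_csup (fun s => B l s * e i s) i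

lemma vnorm_eq_colMax (m : ℕ) :
    vnorm (maxVecMul (maxPow A m) (e i)) = colMax A i m := by
  unfold vnorm colMax
  congr 1
  funext l
  exact maxVecMul_e hA i (maxPow_nonneg hA m) l

lemma rloc_eq_mu : rloc A (e i) = mu A i := by
  have h : (fun m : ℕ => (vnorm (maxVecMul (maxPow A m) (e i))) ^ ((m : ℝ)⁻¹))
      = fun m : ℕ => colMax A i m ^ ((m : ℝ)⁻¹) := by
    funext m
    rw [vnorm_eq_colMax hA i m]
  rw [rloc, h]
  exact (tendsto_colMax_rpow hA i).limsup_eq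

end part1
end S5
namespace S5
open Filter Finset

variable {n : ℕ}

section part2
variable [Nonempty (Fin n)] {B : Matrix (Fin n) (Fin n) ℝ} (hB : ∀ l j, 0 ≤ B l j)
include hB

lemma pow_entry_nonneg : ∀ m (l j : Fin n), 0 ≤ (B ^ m) l j := by
  intro m
  induction m with
  | zero =>
      intro l j
      rw [pow_zero]
      by_cases h : l = j <;> simp [Matrix.one_apply, h]
  | succ m ih =>
      intro l j
      rw [pow_succ, Matrix.mul_apply]
      exact Finset.sum_nonneg fun s _ => mul_nonneg (ih l s) (hB s j)

lemma classical_bounds : ∀ m, 1 ≤ m → ∀ l j,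
    maxPow B m l j ≤ (B ^ m) l j ∧ (B ^ m) l j ≤ (n : ℝ) ^ (m - 1) * maxPow B m l j := by
  intro m
  induction m with
  | zero => omega
  | succ m ih =>
      intro _ l j
      by_cases hm : m = 0
      · subst hm
        rw [pow_one, maxPow_one_eq hB]
        exact ⟨le_refl _, by simp⟩
      · have IH := ih (by omega)
        constructor
        · rw [maxPow_succ_apply, pow_succ, Matrix.mul_apply]
          refine csup_le fun s => ?_
          calc maxPow B m l s * B s j ≤ (B ^ m) l s * B s j :=
                mul_le_mul_of_nonneg_right (IH l s).1 (hB s j)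
            _ ≤ ∑ s', (B ^ m) l s' * B s' j :=
                Finset.single_le_sum
                  (fun s' _ => mul_nonneg (pow_entry_nonneg hB m l s') (hB s' j))
                  (Finset.mem_univ s)
        · rw [pow_succ, Matrix.mul_apply]
          have hterm : ∀ s, (B ^ m) l s * B s j ≤ (n : ℝ) ^ (m - 1) * maxPow B (m + 1) l j := by
            intro s
            calc (B ^ m) l s * B s j
                ≤ ((n : ℝ) ^ (m - 1) * maxPow B m l s) * B s j :=
                  mul_le_mul_of_nonneg_right (IH l s).2 (hB s j)
              _ = (n : ℝ) ^ (m - 1) * (maxPow B m l s * B s j) := by ring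
              _ ≤ (n : ℝ) ^ (m - 1) * maxPow B (m + 1) l j := by
                  refine mul_le_mul_of_nonneg_left ?_ (by positivity)
                  rw [maxPow_succ_apply]
                  exact le_csup (fun s' => maxPow B m l s' * B s' j) s
          calc ∑ s, (B ^ m) l s * B s j
              ≤ Finset.univ.card • ((n : ℝ) ^ (m - 1) * maxPow B (m + 1) l j) :=
                Finset.sum_le_card_nsmul _ _ _ (fun s _ => hterm s)
            _ = (n : ℝ) * ((n : ℝ) ^ (m - 1) * maxPow B (m + 1) l j) := by
                rw [Finset.card_univ, Fintype.card_fin, nsmul_eq_mul]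
            _ = (n : ℝ) ^ (m + 1 - 1) * maxPow B (m + 1) l j := by
                rw [← mul_assoc]
                congr 1
                rw [show m + 1 - 1 = (m - 1) + 1 by omega, pow_succ]
                ring

lemma mulVec_e (i : Fin n) (M : Matrix (Fin n) (Fin n) ℝ) (l : Fin n) :
    (M.mulVec (e i)) l = M l i := by
  simp [Matrix.mulVec, dotProduct, e, mul_ite]

end part2
end S5
namespace S5
open Filter Finset

variable {n : ℕ}

lemma tendsto_mul_atTop {k : ℕ} (hk : 1 ≤ k) :
    Tendsto (fun m : ℕ => k * m) atTop atTop := by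
  refine tendsto_atTop_atTop_of_monotone (fun a b h => Nat.mul_le_mul_left k h) fun b => ⟨b, ?_⟩
  calc b = 1 * b := (one_mul b).symm
    _ ≤ k * b := Nat.mul_le_mul_right b hk

section part3
variable [Nonempty (Fin n)] {A : Matrix (Fin n) (Fin n) ℝ} (hA : ∀ i j, 0 ≤ A i j) (i : Fin n)
include hA

lemma tendsto_colMax_k {k : ℕ} (hk : 1 ≤ k) :
    Tendsto (fun m : ℕ => colMax A i (k * m) ^ ((m : ℝ)⁻¹)) atTop (nhds ((mu A i) ^ k)) := by
  have h1 : Tendsto (fun m : ℕ => colMax A i (k * m) ^ (((k * m : ℕ) : ℝ))⁻¹) atTop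
      (nhds (mu A i)) := (tendsto_colMax_rpow hA i).comp (tendsto_mul_atTop hk)
  have h2 := h1.pow k
  refine h2.congr' ?_
  filter_upwards [eventually_ge_atTop 1] with m hm
  rw [← Real.rpow_natCast (colMax A i (k * m) ^ (((k * m : ℕ) : ℝ))⁻¹) k,
    ← Real.rpow_mul (colMax_nonneg hA i _)]
  congr 1
  have hk0 : (k : ℝ) ≠ 0 := by positivity
  have hm0 : (m : ℝ) ≠ 0 := by
    have : (1:ℝ) ≤ (m:ℝ) := by exact_mod_cast hm
    positivity
  push_cast
  field_simp

lemma rho_bounds {k : ℕ} (hk : 1 ≤ k) :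
    (mu A i) ^ k ≤ rhox (maxPow A k) (e i) ∧
      rhox (maxPow A k) (e i) ≤ (n : ℝ) * (mu A i) ^ k := by
  have hn1 : 1 ≤ n := (Classical.arbitrary (Fin n)).pos
  have hn1R : (1:ℝ) ≤ (n:ℝ) := by exact_mod_cast hn1
  have hB : ∀ l j, 0 ≤ maxPow A k l j := maxPow_nonneg hA k
  set B := maxPow A k with hBdef
  set S : ℕ → ℝ := fun m => ⨆ l, (B ^ m) l i with hS
  have hSnn : ∀ m, 0 ≤ S m := fun m => csup_nonneg fun l => pow_entry_nonneg hB m l i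
  set V : ℕ → ℝ := fun m => S m ^ ((m : ℝ)⁻¹) with hV
  have hrhox : rhox B (e i) = atTop.limsup V := by
    unfold rhox
    congr 1
    funext m
    rw [hV, hS]
    congr 1
    unfold vnorm
    congr 1
    funext l
    exact mulVec_e hB i (B ^ m) l
  have hmaxBm : ∀ m, maxPow B m = maxPow A (k * m) := fun m => maxPow_mul hA m
  have hlow : ∀ m, 1 ≤ m → colMax A i (k * m) ≤ S m := by
    intro m hm
    refine csup_le fun l => ?_
    have h1 := (classical_bounds hB m hm l i).1
    rw [hmaxBm m] at h1
    exact le_trans h1 (le_csup (fun l' => (B ^ m) l' i) l)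
  have hupp : ∀ m, 1 ≤ m → S m ≤ (n : ℝ) ^ (m - 1) * colMax A i (k * m) := by
    intro m hm
    refine csup_le fun l => ?_
    have h1 := (classical_bounds hB m hm l i).2
    rw [hmaxBm m] at h1
    refine le_trans h1 (mul_le_mul_of_nonneg_left ?_ (by positivity))
    exact le_csup (fun l' => maxPow A (k * m) l' i) l
  have hu' := tendsto_colMax_k hA i hk
  have hVg : Filter.IsBoundedUnder (· ≥ ·) atTop V :=
    bddge_of_ev (Eventually.of_forall fun m => Real.rpow_nonneg (hSnn m) _)
  set K₀ := max 1 (matNorm A) with hK₀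
  have hK₀1 : (1:ℝ) ≤ K₀ := le_max_left _ _
  have hVb : Filter.IsBoundedUnder (· ≤ ·) atTop V := by
    refine bdd_of_ev (b := (n : ℝ) * K₀ ^ k) ?_
    filter_upwards [eventually_ge_atTop 1] with m hm
    have h1 : S m ≤ ((n : ℝ) * K₀ ^ k) ^ m := by
      refine le_trans (hupp m hm) ?_
      have h2 : colMax A i (k * m) ≤ K₀ ^ (k * m) := colMax_le hA i (k * m)
      calc (n:ℝ) ^ (m-1) * colMax A i (k*m) ≤ (n:ℝ) ^ (m-1) * K₀ ^ (k*m) :=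
            mul_le_mul_of_nonneg_left h2 (by positivity)
        _ ≤ (n:ℝ) ^ m * K₀ ^ (k*m) :=
            mul_le_mul_of_nonneg_right (pow_le_pow_right₀ hn1R (by omega)) (by positivity)
        _ = ((n:ℝ) * K₀ ^ k) ^ m := by rw [mul_pow, ← pow_mul]
    calc V m ≤ (((n:ℝ) * K₀ ^ k) ^ m) ^ ((m:ℝ)⁻¹) :=
          Real.rpow_le_rpow (hSnn m) h1 (by positivity)
      _ = (n:ℝ) * K₀ ^ k := Real.pow_rpow_inv_natCast (by positivity) (by omega)
  constructor
  · have hle : ∀ᶠ m : ℕ in atTop, colMax A i (k * m) ^ ((m:ℝ)⁻¹) ≤ V m := by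
      filter_upwards [eventually_ge_atTop 1] with m hm
      exact Real.rpow_le_rpow (colMax_nonneg hA i _) (hlow m hm) (by positivity)
    calc (mu A i) ^ k
        = atTop.liminf (fun m : ℕ => colMax A i (k * m) ^ ((m:ℝ)⁻¹)) := (hu'.liminf_eq).symm
      _ ≤ atTop.liminf V := liminf_le_liminf hle hu'.isBoundedUnder_ge hVb.isCoboundedUnder_ge
      _ ≤ atTop.limsup V := liminf_le_limsup hVb hVg
      _ = rhox B (e i) := hrhox.symm
  · have hnpos : (0:ℝ) < (n:ℝ) := lt_of_lt_of_le one_pos hn1R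
    have hf1 : Tendsto (fun m : ℕ => ((n:ℝ) ^ (m - 1)) ^ ((m:ℝ)⁻¹)) atTop (nhds (n:ℝ)) := by
      have hexp : Tendsto (fun m : ℕ => ((m - 1 : ℕ) : ℝ) * (m:ℝ)⁻¹) atTop (nhds 1) := by
        have h2 : Tendsto (fun m : ℕ => 1 - (m:ℝ)⁻¹) atTop (nhds 1) := by
          have h3 : Tendsto (fun m : ℕ => (m:ℝ)⁻¹) atTop (nhds 0) :=
            tendsto_inv_atTop_zero.comp tendsto_natCast_atTop_atTop
          simpa using (tendsto_const_nhds (x := (1:ℝ))).sub h3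
        refine h2.congr' ?_
        filter_upwards [eventually_ge_atTop 1] with m hm
        have hm0 : (m : ℝ) ≠ 0 := by
          have : (1:ℝ) ≤ (m:ℝ) := by exact_mod_cast hm
          positivity
        have hcast : ((m - 1 : ℕ) : ℝ) = (m:ℝ) - 1 := by
          rw [Nat.cast_sub hm]
          norm_num
        rw [hcast]
        field_simp
      have h4 : Tendsto (fun m : ℕ => Real.log n * (((m - 1 : ℕ) : ℝ) * (m:ℝ)⁻¹)) atTop
          (nhds (Real.log n)) := by
        simpa using hexp.const_mul (Real.log n)
      have h5 : Tendsto (fun m : ℕ => Real.exp (Real.log n * (((m - 1 : ℕ) : ℝ) * (m:ℝ)⁻¹)))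
          atTop (nhds (n:ℝ)) := by
        have := (Real.continuous_exp.tendsto (Real.log n)).comp h4
        rw [Real.exp_log hnpos] at this
        exact this
      refine h5.congr fun m => ?_
      rw [← Real.rpow_def_of_pos hnpos, Real.rpow_mul (le_of_lt hnpos),
        Real.rpow_natCast]
    have hW : Tendsto (fun m : ℕ => ((n:ℝ) ^ (m - 1)) ^ ((m:ℝ)⁻¹) * colMax A i (k * m) ^ ((m:ℝ)⁻¹))
        atTop (nhds ((n:ℝ) * (mu A i) ^ k)) := hf1.mul hu'
    have hle2 : ∀ᶠ m : ℕ in atTop,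
        V m ≤ ((n:ℝ) ^ (m - 1)) ^ ((m:ℝ)⁻¹) * colMax A i (k * m) ^ ((m:ℝ)⁻¹) := by
      filter_upwards [eventually_ge_atTop 1] with m hm
      have h1 : V m ≤ ((n:ℝ) ^ (m - 1) * colMax A i (k * m)) ^ ((m:ℝ)⁻¹) :=
        Real.rpow_le_rpow (hSnn m) (hupp m hm) (by positivity)
      rwa [Real.mul_rpow (by positivity) (colMax_nonneg hA i _)] at h1
    calc rhox B (e i) = atTop.limsup V := hrhox
      _ ≤ _ := limsup_le_limsup hle2 hVg.isCoboundedUnder_le hW.isBoundedUnder_le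
      _ = (n:ℝ) * (mu A i) ^ k := hW.limsup_eq

end part3
end S5

/-- `r_{e_i}(A) = lim_k ρ_{e_i}(A^k_⊗)^{1/k} = inf_k ρ_{e_i}(A^k_⊗)^{1/k}
= sup_k (n⁻¹ ρ_{e_i}(A^k_⊗))^{1/k}`. -/
theorem stmt5 {n : ℕ} (A : Matrix (Fin n) (Fin n) ℝ) (hA : ∀ i j, 0 ≤ A i j)
    (i : Fin n) :
    Filter.Tendsto (fun k : ℕ => (rhox (maxPow A k) (e i)) ^ ((k : ℝ)⁻¹))
      Filter.atTop (nhds (rloc A (e i))) ∧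
    rloc A (e i) = ⨅ k : ℕ+, (rhox (maxPow A (k : ℕ)) (e i)) ^ (((k : ℕ) : ℝ))⁻¹ ∧
    rloc A (e i) =
      ⨆ k : ℕ+, ((n : ℝ)⁻¹ * rhox (maxPow A (k : ℕ)) (e i)) ^ (((k : ℕ) : ℝ))⁻¹ := by
  haveI : Nonempty (Fin n) := ⟨i⟩
  have hnR : (0:ℝ) < (n:ℝ) := by exact_mod_cast i.pos
  have hmu0 : 0 ≤ S5.mu A i := S5.mu_nonneg hA i
  have hr : rloc A (e i) = S5.mu A i := S5.rloc_eq_mu hA i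
  set μ := S5.mu A i with hμ
  have hρnn : ∀ k : ℕ, 1 ≤ k → 0 ≤ rhox (maxPow A k) (e i) := fun k hk =>
    le_trans (by positivity) (S5.rho_bounds hA i hk).1
  have hlowT : ∀ k : ℕ, 1 ≤ k → μ ≤ (rhox (maxPow A k) (e i)) ^ ((k:ℝ)⁻¹) := by
    intro k hk
    have hb := (S5.rho_bounds hA i hk).1
    calc μ = (μ ^ k) ^ ((k:ℝ)⁻¹) := (Real.pow_rpow_inv_natCast hmu0 (by omega)).symm
      _ ≤ _ := Real.rpow_le_rpow (by positivity) hb (by positivity)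
  have huppT : ∀ k : ℕ, 1 ≤ k →
      (rhox (maxPow A k) (e i)) ^ ((k:ℝ)⁻¹) ≤ (n:ℝ) ^ ((k:ℝ)⁻¹) * μ := by
    intro k hk
    have hb := (S5.rho_bounds hA i hk).2
    calc (rhox (maxPow A k) (e i)) ^ ((k:ℝ)⁻¹)
        ≤ ((n:ℝ) * μ ^ k) ^ ((k:ℝ)⁻¹) := Real.rpow_le_rpow (hρnn k hk) hb (by positivity)
      _ = (n:ℝ) ^ ((k:ℝ)⁻¹) * (μ ^ k) ^ ((k:ℝ)⁻¹) :=
          Real.mul_rpow (le_of_lt hnR) (by positivity)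
      _ = (n:ℝ) ^ ((k:ℝ)⁻¹) * μ := by rw [Real.pow_rpow_inv_natCast hmu0 (by omega)]
  have hTendsto : Filter.Tendsto (fun k : ℕ => (rhox (maxPow A k) (e i)) ^ ((k : ℝ)⁻¹))
      Filter.atTop (nhds μ) := by
    have hupper : Filter.Tendsto (fun k : ℕ => (n:ℝ) ^ ((k:ℝ)⁻¹) * μ) Filter.atTop (nhds μ) := by
      simpa using (S5.tendsto_rpow_inv_one hnR).mul_const μ
    refine tendsto_of_tendsto_of_tendsto_of_le_of_le' tendsto_const_nhds hupper ?_ ?_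
    · filter_upwards [Filter.eventually_ge_atTop 1] with k hk
      exact hlowT k hk
    · filter_upwards [Filter.eventually_ge_atTop 1] with k hk
      exact huppT k hk
  refine ⟨by rw [hr]; exact hTendsto, ?_, ?_⟩
  · rw [hr]
    have hbdd : BddBelow (Set.range fun k : ℕ+ =>
        (rhox (maxPow A (k : ℕ)) (e i)) ^ (((k : ℕ) : ℝ))⁻¹) := by
      refine ⟨μ, ?_⟩
      rintro x ⟨k, rfl⟩
      exact hlowT (k : ℕ) k.2
    apply le_antisymm
    · exact le_ciInf fun k => hlowT (k : ℕ) k.2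
    · refine le_of_forall_pos_le_add fun ε hε => ?_
      obtain ⟨N, hN⟩ := Metric.tendsto_atTop.mp hTendsto ε hε
      have hN1 := hN (N + 1) (by omega)
      rw [Real.dist_eq, abs_lt] at hN1
      have h3 : (rhox (maxPow A (N + 1)) (e i)) ^ (((N + 1 : ℕ) : ℝ))⁻¹ ≤ μ + ε := by
        linarith [hN1.2]
      set k₀ : ℕ+ := ⟨N + 1, by omega⟩ with hk₀
      have h2 := ciInf_le hbdd k₀
      exact le_trans h2 h3
  · rw [hr]
    have hGle : ∀ k : ℕ+,
        ((n:ℝ)⁻¹ * rhox (maxPow A (k : ℕ)) (e i)) ^ (((k : ℕ) : ℝ))⁻¹ ≤ μ := by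
      intro k
      have hk : 1 ≤ (k : ℕ) := k.2
      have hb := (S5.rho_bounds hA i hk).2
      have h1 : (n:ℝ)⁻¹ * rhox (maxPow A (k : ℕ)) (e i) ≤ μ ^ (k : ℕ) := by
        have h2 := mul_le_mul_of_nonneg_left hb (by positivity : (0:ℝ) ≤ (n:ℝ)⁻¹)
        rwa [← mul_assoc, inv_mul_cancel₀ (ne_of_gt hnR), one_mul] at h2
      calc ((n:ℝ)⁻¹ * rhox (maxPow A (k : ℕ)) (e i)) ^ (((k : ℕ) : ℝ))⁻¹
          ≤ (μ ^ (k : ℕ)) ^ (((k : ℕ) : ℝ))⁻¹ :=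
            Real.rpow_le_rpow (mul_nonneg (by positivity) (hρnn _ hk)) h1 (by positivity)
        _ = μ := Real.pow_rpow_inv_natCast hmu0 (by omega)
    have hbdd : BddAbove (Set.range fun k : ℕ+ =>
        ((n:ℝ)⁻¹ * rhox (maxPow A (k : ℕ)) (e i)) ^ (((k : ℕ) : ℝ))⁻¹) := by
      refine ⟨μ, ?_⟩
      rintro x ⟨k, rfl⟩
      exact hGle k
    apply le_antisymm
    · refine le_of_forall_pos_le_add fun ε hε => ?_
      have hGlow : ∀ k : ℕ, 1 ≤ k →
          ((n:ℝ)⁻¹) ^ ((k:ℝ)⁻¹) * μ ≤ ((n:ℝ)⁻¹ * rhox (maxPow A k) (e i)) ^ ((k:ℝ)⁻¹) := by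
        intro k hk
        have hb := (S5.rho_bounds hA i hk).1
        calc ((n:ℝ)⁻¹) ^ ((k:ℝ)⁻¹) * μ
            = ((n:ℝ)⁻¹ * μ ^ k) ^ ((k:ℝ)⁻¹) := by
              rw [Real.mul_rpow (by positivity) (by positivity),
                Real.pow_rpow_inv_natCast hmu0 (by omega)]
          _ ≤ _ := Real.rpow_le_rpow (by positivity)
              (mul_le_mul_of_nonneg_left hb (by positivity)) (by positivity)
      have htend : Filter.Tendsto (fun k : ℕ => ((n:ℝ)⁻¹) ^ ((k:ℝ)⁻¹) * μ)
          Filter.atTop (nhds μ) := by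
        simpa using (S5.tendsto_rpow_inv_one (by positivity : (0:ℝ) < (n:ℝ)⁻¹)).mul_const μ
      obtain ⟨N, hN⟩ := Metric.tendsto_atTop.mp htend ε hε
      have hN1 := hN (N + 1) (by omega)
      rw [Real.dist_eq, abs_lt] at hN1
      have h4 := hGlow (N + 1) (by omega)
      set k₀ : ℕ+ := ⟨N + 1, by omega⟩ with hk₀
      have hle := le_ciSup hbdd k₀
      have h5 : ((n:ℝ)⁻¹ * rhox (maxPow A (N + 1)) (e i)) ^ (((N + 1 : ℕ) : ℝ))⁻¹
          ≤ ⨆ k : ℕ+, ((n:ℝ)⁻¹ * rhox (maxPow A (k : ℕ)) (e i)) ^ (((k : ℕ) : ℝ))⁻¹ := hle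
      linarith [hN1.1]
    · exact ciSup_le hGle
end

section
/- For any nonnegative n×n matrix A and index i, the classical local spectral radius satisfies ρ_{e_i}(A) = lim_{k→∞} r_{e_i}(A^k)^{1/k} = sup_{k∈ℕ} r_{e_i}(A^k)^{1/k} = inf_{k∈ℕ} (n·r_{e_i}(A^k))^{1/k}, where A^k is the classical k-th power and r denotes the max-algebra local spectral radius. -/
open Filter Finset

noncomputable section S6aux
namespace S6

variable {n : ℕ}

lemma le_sup (v : Fin n → ℝ) (j : Fin n) : v j ≤ ⨆ l, v l :=
  le_ciSup (Finite.bddAbove_range v) j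

lemma pow_entry_nonneg (A : Matrix (Fin n) (Fin n) ℝ) (hA : ∀ i j, 0 ≤ A i j) :
    ∀ (k : ℕ) (a b : Fin n), 0 ≤ (A ^ k) a b := by
  intro k
  induction k with
  | zero => intro a b; simp [Matrix.one_apply]; positivity
  | succ k ih =>
    intro a b
    rw [pow_succ, Matrix.mul_apply]
    exact Finset.sum_nonneg fun l _ => mul_nonneg (ih a l) (hA l b)

lemma maxPow_entry_nonneg (A : Matrix (Fin n) (Fin n) ℝ) (hA : ∀ i j, 0 ≤ A i j) :
    ∀ (k : ℕ) (a b : Fin n), 0 ≤ maxPow A k a b := by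
  intro k
  induction k with
  | zero => intro a b; unfold maxPow; positivity
  | succ k ih =>
    intro a b
    exact Real.iSup_nonneg fun l => mul_nonneg (ih a l) (hA l b)

lemma maxPow_le_pow (A : Matrix (Fin n) (Fin n) ℝ) (hA : ∀ i j, 0 ≤ A i j) :
    ∀ (k : ℕ) (a b : Fin n), maxPow A k a b ≤ (A ^ k) a b := by
  intro k
  induction k with
  | zero => intro a b; simp [maxPow, Matrix.one_apply]
  | succ k ih =>
    intro a b
    have : Nonempty (Fin n) := ⟨a⟩
    rw [pow_succ, Matrix.mul_apply]
    refine ciSup_le fun l => ?_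
    calc maxPow A k a l * A l b ≤ (A ^ k) a l * A l b :=
          mul_le_mul_of_nonneg_right (ih a l) (hA l b)
      _ ≤ ∑ l', (A ^ k) a l' * A l' b := by
          exact Finset.single_le_sum (f := fun l' => (A ^ k) a l' * A l' b)
            (fun l' _ => mul_nonneg (pow_entry_nonneg A hA k a l') (hA l' b))
            (Finset.mem_univ l)

lemma pow_le_maxPow (A : Matrix (Fin n) (Fin n) ℝ) (hA : ∀ i j, 0 ≤ A i j) :
    ∀ (k : ℕ) (a b : Fin n), (A ^ k) a b ≤ (n : ℝ) ^ k * maxPow A k a b := by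
  intro k
  induction k with
  | zero =>
    intro a b
    show (A ^ 0) a b ≤ (n : ℝ) ^ 0 * maxPow A 0 a b
    rw [pow_zero, pow_zero, one_mul]
    simp [maxPow, Matrix.one_apply]
  | succ k ih =>
    intro a b
    have : Nonempty (Fin n) := ⟨a⟩
    rw [pow_succ, Matrix.mul_apply]
    have hterm : ∀ l : Fin n, (A ^ k) a l * A l b ≤
        (n : ℝ) ^ k * maxPow A (k + 1) a b := by
      intro l
      calc (A ^ k) a l * A l b ≤ ((n : ℝ) ^ k * maxPow A k a l) * A l b :=
            mul_le_mul_of_nonneg_right (ih a l) (hA l b)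
        _ = (n : ℝ) ^ k * (maxPow A k a l * A l b) := by ring
        _ ≤ (n : ℝ) ^ k * maxPow A (k + 1) a b := by
            refine mul_le_mul_of_nonneg_left ?_ (by positivity)
            exact le_sup (fun l => maxPow A k a l * A l b) l
    calc ∑ l, (A ^ k) a l * A l b ≤ ∑ _l : Fin n, (n : ℝ) ^ k * maxPow A (k + 1) a b :=
          Finset.sum_le_sum fun l _ => hterm l
      _ = (n : ℝ) ^ (k + 1) * maxPow A (k + 1) a b := by
          simp [Finset.sum_const, Finset.card_univ]; ring


variable (A : Matrix (Fin n) (Fin n) ℝ) (i : Fin n)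

/-- column sequence `f k = max_j (A^k)_{j i}`. -/
def fs (k : ℕ) : ℝ := ⨆ j, (A ^ k) j i

/-- max-algebra column sequence for `A^m`. -/
def gs (m k : ℕ) : ℝ := ⨆ j, maxPow (A ^ m) k j i

def CC : ℝ := max ((n : ℝ) * matNorm A) 1

variable {A i}

lemma one_le_CC : 1 ≤ CC A := le_max_right _ _

lemma le_fs (k : ℕ) (j : Fin n) : (A ^ k) j i ≤ fs A i k :=
  le_sup (fun j => (A ^ k) j i) j

lemma le_gs (m k : ℕ) (j : Fin n) : maxPow (A ^ m) k j i ≤ gs A i m k :=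
  le_sup (fun j => maxPow (A ^ m) k j i) j

lemma CC_pos : (0:ℝ) < CC A := lt_of_lt_of_le one_pos one_le_CC

lemma fs_nonneg (hA : ∀ i j, 0 ≤ A i j) (k : ℕ) : 0 ≤ fs A i k :=
  Real.iSup_nonneg fun j => pow_entry_nonneg A hA k j i

lemma gs_nonneg (hA : ∀ i j, 0 ≤ A i j) (m k : ℕ) : 0 ≤ gs A i m k :=
  Real.iSup_nonneg fun j => maxPow_entry_nonneg _ (pow_entry_nonneg A hA m) k j i

lemma fs_zero : fs A i 0 = 1 := by
  have : Nonempty (Fin n) := ⟨i⟩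
  refine le_antisymm (ciSup_le fun j => ?_) ?_
  · rw [pow_zero, Matrix.one_apply]
    split <;> norm_num
  · have := le_sup (fun j => (A ^ 0) j i) i
    simpa [fs, Matrix.one_apply] using this

lemma gs_le_fs (hA : ∀ i j, 0 ≤ A i j) (m k : ℕ) : gs A i m k ≤ fs A i (m * k) := by
  have : Nonempty (Fin n) := ⟨i⟩
  refine ciSup_le fun j => ?_
  calc maxPow (A ^ m) k j i ≤ ((A ^ m) ^ k) j i :=
        maxPow_le_pow _ (pow_entry_nonneg A hA m) k j i
    _ = (A ^ (m * k)) j i := by rw [← pow_mul]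
    _ ≤ fs A i (m * k) := le_fs _ j

lemma fs_le_gs (hA : ∀ i j, 0 ≤ A i j) (m k : ℕ) :
    fs A i (m * k) ≤ (n : ℝ) ^ k * gs A i m k := by
  have : Nonempty (Fin n) := ⟨i⟩
  refine ciSup_le fun j => ?_
  calc (A ^ (m * k)) j i = ((A ^ m) ^ k) j i := by rw [← pow_mul]
    _ ≤ (n : ℝ) ^ k * maxPow (A ^ m) k j i :=
        pow_le_maxPow _ (pow_entry_nonneg A hA m) k j i
    _ ≤ (n : ℝ) ^ k * gs A i m k :=
        mul_le_mul_of_nonneg_left (le_gs m k j) (by positivity)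

lemma entry_le_matNorm (a b : Fin n) : A a b ≤ matNorm A :=
  le_trans (le_sup (fun c => A a c) b) (le_sup (fun c => ⨆ d, A c d) a)

lemma matNorm_nonneg (hA : ∀ i j, 0 ≤ A i j) : 0 ≤ matNorm A :=
  Real.iSup_nonneg fun a => Real.iSup_nonneg fun b => hA a b

lemma fs_succ_le (hA : ∀ i j, 0 ≤ A i j) (k : ℕ) :
    fs A i (k + 1) ≤ CC A * fs A i k := by
  have : Nonempty (Fin n) := ⟨i⟩
  refine ciSup_le fun j => ?_
  rw [pow_succ']
  rw [Matrix.mul_apply]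
  calc ∑ l, A j l * (A ^ k) l i ≤ ∑ _l : Fin n, matNorm A * fs A i k := by
        refine Finset.sum_le_sum fun l _ => ?_
        exact mul_le_mul (entry_le_matNorm j l) (le_fs k l)
          (pow_entry_nonneg A hA k l i) (matNorm_nonneg hA)
    _ = ((n : ℝ) * matNorm A) * fs A i k := by
        simp [Finset.sum_const, Finset.card_univ]; ring
    _ ≤ CC A * fs A i k :=
        mul_le_mul_of_nonneg_right (le_max_left _ _) (fs_nonneg hA k)

lemma fs_add_le (hA : ∀ i j, 0 ≤ A i j) (a b : ℕ) :
    fs A i (a + b) ≤ CC A ^ b * fs A i a := by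
  induction b with
  | zero => simp
  | succ b ih =>
    calc fs A i (a + (b + 1)) = fs A i ((a + b) + 1) := by ring_nf
      _ ≤ CC A * fs A i (a + b) := fs_succ_le hA _
      _ ≤ CC A * (CC A ^ b * fs A i a) :=
          mul_le_mul_of_nonneg_left ih (le_of_lt CC_pos)
      _ = CC A ^ (b + 1) * fs A i a := by ring

lemma fs_le_CC_pow (hA : ∀ i j, 0 ≤ A i j) (k : ℕ) : fs A i k ≤ CC A ^ k := by
  have h := fs_add_le (i := i) hA 0 k
  simpa [fs_zero] using h


lemma rhox_eq : rhox A (e i) = Filter.atTop.limsup (fun k : ℕ => fs A i k ^ ((k : ℝ)⁻¹)) := by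
  unfold rhox
  congr 1
  funext k
  congr 1
  unfold vnorm fs
  congr 1
  funext j
  simp [Matrix.mulVec, dotProduct, e, mul_ite, mul_one, mul_zero]

lemma rloc_eq (hA : ∀ i j, 0 ≤ A i j) (m : ℕ) :
    rloc (A ^ m) (e i) = Filter.atTop.limsup (fun k : ℕ => gs A i m k ^ ((k : ℝ)⁻¹)) := by
  have : Nonempty (Fin n) := ⟨i⟩
  unfold rloc
  congr 1
  funext k
  congr 1
  unfold vnorm gs
  congr 1
  funext j
  unfold maxVecMul
  refine le_antisymm (ciSup_le fun l => ?_) ?_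
  · unfold e
    rcases eq_or_ne l i with rfl | h
    · simp
    · simp [h, maxPow_entry_nonneg _ (pow_entry_nonneg A hA m) k j i]
  · have := le_sup (fun l => maxPow (A ^ m) k j l * e i l) i
    simpa [e] using this

lemma fs_rpow_le (hA : ∀ i j, 0 ≤ A i j) (k : ℕ) : fs A i k ^ ((k : ℝ)⁻¹) ≤ CC A := by
  cases k with
  | zero => simpa using one_le_CC (A := A)
  | succ k =>
    have h1 : fs A i (k+1) ^ (((k+1 : ℕ) : ℝ)⁻¹) ≤ (CC A ^ (k+1)) ^ (((k+1 : ℕ) : ℝ)⁻¹) :=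
      Real.rpow_le_rpow (fs_nonneg hA _) (fs_le_CC_pow hA _) (by positivity)
    rwa [Real.pow_rpow_inv_natCast (le_of_lt CC_pos) (Nat.succ_ne_zero k)] at h1

lemma gs_rpow_le (hA : ∀ i j, 0 ≤ A i j) (m k : ℕ) :
    gs A i m k ^ ((k : ℝ)⁻¹) ≤ CC A ^ m := by
  cases k with
  | zero => simpa using one_le_pow₀ (one_le_CC (A := A))
  | succ k =>
    have h2 : gs A i m (k+1) ≤ (CC A ^ m) ^ (k+1) := by
      calc gs A i m (k+1) ≤ fs A i (m * (k+1)) := gs_le_fs hA m _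
        _ ≤ CC A ^ (m * (k+1)) := fs_le_CC_pow hA _
        _ = (CC A ^ m) ^ (k+1) := by rw [pow_mul]
    have h1 : gs A i m (k+1) ^ (((k+1 : ℕ) : ℝ)⁻¹) ≤ ((CC A ^ m) ^ (k+1)) ^ (((k+1 : ℕ) : ℝ)⁻¹) :=
      Real.rpow_le_rpow (gs_nonneg hA _ _) h2 (by positivity)
    rwa [Real.pow_rpow_inv_natCast (pow_nonneg (le_of_lt CC_pos) m) (Nat.succ_ne_zero k)] at h1

lemma fs_bounded (hA : ∀ i j, 0 ≤ A i j) :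
    Filter.IsBoundedUnder (· ≤ ·) Filter.atTop (fun k : ℕ => fs A i k ^ ((k : ℝ)⁻¹)) :=
  Filter.isBoundedUnder_of ⟨CC A, fun k => fs_rpow_le hA k⟩

lemma gs_bounded (hA : ∀ i j, 0 ≤ A i j) (m : ℕ) :
    Filter.IsBoundedUnder (· ≤ ·) Filter.atTop (fun k : ℕ => gs A i m k ^ ((k : ℝ)⁻¹)) :=
  Filter.isBoundedUnder_of ⟨CC A ^ m, fun k => gs_rpow_le hA m k⟩

lemma fs_cobounded (hA : ∀ i j, 0 ≤ A i j) :
    Filter.IsCoboundedUnder (· ≤ ·) Filter.atTop (fun k : ℕ => fs A i k ^ ((k : ℝ)⁻¹)) :=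
  Filter.isCoboundedUnder_le_of_le _ fun k => Real.rpow_nonneg (fs_nonneg hA k) _

lemma gs_cobounded (hA : ∀ i j, 0 ≤ A i j) (m : ℕ) :
    Filter.IsCoboundedUnder (· ≤ ·) Filter.atTop (fun k : ℕ => gs A i m k ^ ((k : ℝ)⁻¹)) :=
  Filter.isCoboundedUnder_le_of_le _ fun k => Real.rpow_nonneg (gs_nonneg hA m k) _

lemma rhox_nonneg (hA : ∀ i j, 0 ≤ A i j) : 0 ≤ rhox A (e i) := by
  rw [rhox_eq]
  exact Filter.le_limsup_of_frequently_le
    ((Filter.Eventually.of_forall fun k => Real.rpow_nonneg (fs_nonneg hA k) _).frequently)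
    (fs_bounded hA)

lemma rloc_nonneg (hA : ∀ i j, 0 ≤ A i j) (m : ℕ) : 0 ≤ rloc (A ^ m) (e i) := by
  rw [rloc_eq hA]
  exact Filter.le_limsup_of_frequently_le
    ((Filter.Eventually.of_forall fun k => Real.rpow_nonneg (gs_nonneg hA m k) _).frequently)
    (gs_bounded hA m)


lemma tendsto_const_rpow {b : ℝ} (hb : 0 < b) {u : ℕ → ℝ} {L : ℝ}
    (hu : Filter.Tendsto u Filter.atTop (nhds L)) :
    Filter.Tendsto (fun N => b ^ (u N)) Filter.atTop (nhds (b ^ L)) := by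
  simp_rw [Real.rpow_def_of_pos hb]
  exact (Real.continuous_exp.tendsto _).comp (hu.const_mul _)

lemma tendsto_inv_nat : Filter.Tendsto (fun N : ℕ => ((N : ℝ))⁻¹) Filter.atTop (nhds 0) :=
  tendsto_inv_atTop_zero.comp tendsto_natCast_atTop_atTop

lemma tendsto_qdiv (m : ℕ) (hm : 1 ≤ m) :
    Filter.Tendsto (fun N : ℕ => ((N / m : ℕ) : ℝ) * ((N : ℝ))⁻¹) Filter.atTop
      (nhds ((m : ℝ)⁻¹)) := by
  have hlow : Filter.Tendsto (fun N : ℕ => (m : ℝ)⁻¹ - ((N : ℝ))⁻¹) Filter.atTop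
      (nhds ((m : ℝ)⁻¹)) := by
    simpa using (tendsto_const_nhds (x := (m:ℝ)⁻¹)).sub tendsto_inv_nat
  refine tendsto_of_tendsto_of_tendsto_of_le_of_le' hlow tendsto_const_nhds ?_ ?_
  · filter_upwards [Filter.eventually_ge_atTop 1] with N hN
    have hN0 : (0:ℝ) < (N:ℝ) := by exact_mod_cast hN
    have hm0 : (0:ℝ) < (m:ℝ) := by exact_mod_cast hm
    have key : (N : ℝ) ≤ (((N / m : ℕ) : ℝ) + 1) * m := by
      have := Nat.lt_mul_div_succ N (show 0 < m by omega)
      have : (N : ℝ) < (m : ℝ) * (((N / m : ℕ) : ℝ) + 1) := by exact_mod_cast this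
      linarith
    have h1 : (m : ℝ)⁻¹ ≤ (((N / m : ℕ) : ℝ) + 1) * (N : ℝ)⁻¹ := by
      have : (1:ℝ)/m ≤ (((N / m : ℕ) : ℝ) + 1)/N := by
        rw [div_le_div_iff₀ hm0 hN0]; linarith
      rw [inv_eq_one_div]
      rwa [div_eq_mul_inv (((N / m : ℕ) : ℝ) + 1)] at this
    have expand : (((N / m : ℕ) : ℝ) + 1) * (N : ℝ)⁻¹
        = ((N / m : ℕ) : ℝ) * (N : ℝ)⁻¹ + (N : ℝ)⁻¹ := by ring
    linarith
  · filter_upwards [Filter.eventually_ge_atTop 1] with N hN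
    have hN0 : (0:ℝ) < (N:ℝ) := by exact_mod_cast hN
    have hm0 : (0:ℝ) < (m:ℝ) := by exact_mod_cast hm
    have key : ((N / m : ℕ) : ℝ) * (m : ℝ) ≤ (N : ℝ) := by
      exact_mod_cast Nat.div_mul_le_self N m
    have : ((N / m : ℕ) : ℝ)/N ≤ 1/m := by
      rw [div_le_div_iff₀ hN0 hm0]; linarith
    rw [div_eq_mul_inv, one_div] at this
    exact this


lemma key (hA : ∀ i j, 0 ≤ A i j) (m : ℕ) (hm : 1 ≤ m) (D : ℝ) (hD : 0 < D)
    (h : ∀ᶠ k in Filter.atTop, fs A i (m * k) ≤ D ^ k) :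
    rhox A (e i) ≤ D ^ ((m : ℝ)⁻¹) := by
  obtain ⟨K, hK⟩ := Filter.eventually_atTop.mp h
  have hC1 : 1 ≤ CC A := one_le_CC
  have hC0 : (0:ℝ) < CC A := CC_pos
  set v : ℕ → ℝ := fun N =>
    CC A ^ ((m : ℝ) * ((N : ℝ))⁻¹) * D ^ (((N / m : ℕ) : ℝ) * ((N : ℝ))⁻¹) with hv
  have hbound : ∀ᶠ N in Filter.atTop, fs A i N ^ ((N : ℝ)⁻¹) ≤ v N := by
    filter_upwards [Filter.eventually_ge_atTop (m * K)] with N hN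
    set q := N / m with hq
    have hqK : K ≤ q := (Nat.le_div_iff_mul_le (by omega)).mpr
      (by rwa [Nat.mul_comm m K] at hN)
    have hfsN : fs A i N ≤ CC A ^ m * D ^ q := by
      calc fs A i N = fs A i (m * q + N % m) := by rw [Nat.div_add_mod]
        _ ≤ CC A ^ (N % m) * fs A i (m * q) := fs_add_le hA _ _
        _ ≤ CC A ^ m * D ^ q := by
            refine mul_le_mul (pow_le_pow_right₀ hC1 (le_of_lt (Nat.mod_lt N (by omega))))
              (hK q hqK) (fs_nonneg hA _) (by positivity)
    calc fs A i N ^ ((N : ℝ)⁻¹) ≤ (CC A ^ m * D ^ q) ^ ((N : ℝ)⁻¹) :=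
          Real.rpow_le_rpow (fs_nonneg hA N) hfsN (by positivity)
      _ = v N := by
          rw [Real.mul_rpow (by positivity) (by positivity), ← Real.rpow_natCast (CC A) m,
            ← Real.rpow_natCast D q, ← Real.rpow_mul (le_of_lt hC0),
            ← Real.rpow_mul (le_of_lt hD)]
  have hvlim : Filter.Tendsto v Filter.atTop (nhds (D ^ ((m : ℝ)⁻¹))) := by
    have t1 : Filter.Tendsto (fun N : ℕ => (m : ℝ) * ((N : ℝ))⁻¹) Filter.atTop (nhds 0) := by
      simpa using tendsto_inv_nat.const_mul (m : ℝ)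
    have c1 := tendsto_const_rpow hC0 t1
    have c2 := tendsto_const_rpow hD (tendsto_qdiv m hm)
    have := c1.mul c2
    simpa [Real.rpow_zero] using this
  rw [rhox_eq]
  calc Filter.atTop.limsup (fun k : ℕ => fs A i k ^ ((k : ℝ)⁻¹))
      ≤ Filter.atTop.limsup v :=
        Filter.limsup_le_limsup hbound (fs_cobounded hA) hvlim.isBoundedUnder_le
    _ = D ^ ((m : ℝ)⁻¹) := hvlim.limsup_eq


lemma upper (hA : ∀ i j, 0 ≤ A i j) (m : ℕ) (hm : 1 ≤ m) :
    rloc (A ^ m) (e i) ≤ rhox A (e i) ^ m := by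
  set ρ := rhox A (e i) with hρ
  have hρ0 : 0 ≤ ρ := rhox_nonneg hA
  have hstep : ∀ ε : ℝ, 0 < ε → rloc (A ^ m) (e i) ≤ (ρ + ε) ^ m := by
    intro ε hε
    have hρε : (0:ℝ) ≤ ρ + ε := by linarith
    rw [rloc_eq hA]
    refine Filter.limsup_le_of_le (gs_cobounded hA m) ?_
    have hev : ∀ᶠ j in Filter.atTop, fs A i j ^ ((j : ℝ)⁻¹) < ρ + ε := by
      refine Filter.eventually_lt_of_limsup_lt ?_ (fs_bounded hA)
      have h0 : Filter.atTop.limsup (fun k : ℕ => fs A i k ^ ((k : ℝ)⁻¹)) = ρ :=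
        (rhox_eq).symm
      rw [h0]; linarith
    obtain ⟨J, hJ⟩ := Filter.eventually_atTop.mp hev
    filter_upwards [Filter.eventually_ge_atTop (max J 1)] with k hk
    have hk1 : 1 ≤ k := le_trans (le_max_right J 1) hk
    have hkJ : J ≤ k := le_trans (le_max_left J 1) hk
    have hmkJ : J ≤ m * k := le_trans hkJ (Nat.le_mul_of_pos_left k (by omega))
    have h2 : fs A i (m * k) ≤ (ρ + ε) ^ (m * k) := by
      have h3 := le_of_lt (hJ (m * k) hmkJ)
      have h4 : (fs A i (m * k) ^ (((m * k : ℕ) : ℝ)⁻¹)) ^ (m * k) ≤ (ρ + ε) ^ (m * k) :=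
        pow_le_pow_left₀ (Real.rpow_nonneg (fs_nonneg hA _) _) h3 _
      rwa [Real.rpow_inv_natCast_pow (fs_nonneg hA _) (by positivity)] at h4
    have h5 : gs A i m k ≤ ((ρ + ε) ^ m) ^ k := by
      calc gs A i m k ≤ fs A i (m * k) := gs_le_fs hA m k
        _ ≤ (ρ + ε) ^ (m * k) := h2
        _ = ((ρ + ε) ^ m) ^ k := pow_mul _ _ _
    calc gs A i m k ^ ((k : ℝ)⁻¹) ≤ (((ρ + ε) ^ m) ^ k) ^ ((k : ℝ)⁻¹) :=
          Real.rpow_le_rpow (gs_nonneg hA m k) h5 (by positivity)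
      _ = (ρ + ε) ^ m := Real.pow_rpow_inv_natCast (pow_nonneg hρε m) (by omega)
  have t0 : Filter.Tendsto (fun j : ℕ => (((j + 1 : ℕ)) : ℝ)⁻¹) Filter.atTop (nhds 0) :=
    tendsto_inv_nat.comp (Filter.tendsto_add_atTop_nat 1)
  have hseq : Filter.Tendsto (fun j : ℕ => (ρ + (((j + 1 : ℕ)) : ℝ)⁻¹) ^ m)
      Filter.atTop (nhds (ρ ^ m)) := by
    have h1 := ((tendsto_const_nhds (x := ρ)).add t0).pow m
    simpa using h1
  refine ge_of_tendsto hseq (Filter.Eventually.of_forall fun j => hstep _ ?_)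
  exact inv_pos.mpr (by exact_mod_cast Nat.succ_pos j)

lemma lower (hA : ∀ i j, 0 ≤ A i j) (m : ℕ) (hm : 1 ≤ m) :
    rhox A (e i) ^ m ≤ (n : ℝ) * rloc (A ^ m) (e i) := by
  have hne : Nonempty (Fin n) := ⟨i⟩
  have hn : 0 < n := i.pos
  have hn1 : (1:ℝ) ≤ (n:ℝ) := by exact_mod_cast hn
  set t := rloc (A ^ m) (e i) with ht
  have ht0 : 0 ≤ t := rloc_nonneg hA m
  have hρ0 : 0 ≤ rhox A (e i) := rhox_nonneg hA
  refine le_of_forall_pos_le_add ?_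
  intro ε hε
  set δ := ε / n with hδ
  have hδpos : 0 < δ := div_pos hε (by linarith)
  have hev : ∀ᶠ k in Filter.atTop, gs A i m k ^ ((k : ℝ)⁻¹) < t + δ := by
    refine Filter.eventually_lt_of_limsup_lt ?_ (gs_bounded hA m)
    have h0 : Filter.atTop.limsup (fun k : ℕ => gs A i m k ^ ((k : ℝ)⁻¹)) = t :=
      (rloc_eq hA m).symm
    rw [h0]; linarith
  obtain ⟨J, hJ⟩ := Filter.eventually_atTop.mp hev
  have hfev : ∀ᶠ k in Filter.atTop, fs A i (m * k) ≤ ((n : ℝ) * (t + δ)) ^ k := by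
    filter_upwards [Filter.eventually_ge_atTop (max J 1)] with k hk
    have hk1 : 1 ≤ k := le_trans (le_max_right J 1) hk
    have hkJ : J ≤ k := le_trans (le_max_left J 1) hk
    have hg : gs A i m k ≤ (t + δ) ^ k := by
      have h3 := le_of_lt (hJ k hkJ)
      have h4 := pow_le_pow_left₀ (Real.rpow_nonneg (gs_nonneg hA m k) _) h3 k
      rwa [Real.rpow_inv_natCast_pow (gs_nonneg hA m k) (by omega)] at h4
    calc fs A i (m * k) ≤ (n : ℝ) ^ k * gs A i m k := fs_le_gs hA m k
      _ ≤ (n : ℝ) ^ k * (t + δ) ^ k := mul_le_mul_of_nonneg_left hg (by positivity)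
      _ = ((n : ℝ) * (t + δ)) ^ k := (mul_pow _ _ _).symm
  have hpos : (0:ℝ) < (n : ℝ) * (t + δ) := mul_pos (by linarith) (by linarith)
  have hkey := key hA m hm ((n : ℝ) * (t + δ)) hpos hfev
  have h6 : rhox A (e i) ^ m ≤ ((((n : ℝ) * (t + δ)) ^ ((m : ℝ)⁻¹))) ^ m :=
    pow_le_pow_left₀ hρ0 hkey m
  rw [Real.rpow_inv_natCast_pow (le_of_lt hpos) (by omega)] at h6
  have hfin : (n : ℝ) * (t + δ) = (n : ℝ) * t + ε := by
    rw [hδ]; field_simp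
  linarith [h6, hfin.le]

end S6
end S6aux

/-- `ρ_{e_i}(A) = lim_k r_{e_i}(A^k)^{1/k} = sup_k r_{e_i}(A^k)^{1/k}
= inf_k (n · r_{e_i}(A^k))^{1/k}` (classical powers `A^k`). -/
theorem stmt6 {n : ℕ} (A : Matrix (Fin n) (Fin n) ℝ) (hA : ∀ i j, 0 ≤ A i j)
    (i : Fin n) :
    Filter.Tendsto (fun k : ℕ => (rloc (A ^ k) (e i)) ^ ((k : ℝ)⁻¹))
      Filter.atTop (nhds (rhox A (e i))) ∧
    rhox A (e i) = ⨆ k : ℕ+, (rloc (A ^ (k : ℕ)) (e i)) ^ (((k : ℕ) : ℝ))⁻¹ ∧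
    rhox A (e i) =
      ⨅ k : ℕ+, ((n : ℝ) * rloc (A ^ (k : ℕ)) (e i)) ^ (((k : ℕ) : ℝ))⁻¹ := by

  have hne : Nonempty (Fin n) := ⟨i⟩
  have hn : 0 < n := i.pos
  have hn1 : (1:ℝ) ≤ (n:ℝ) := by exact_mod_cast hn
  set ρ := rhox A (e i) with hρ
  have hρ0 : 0 ≤ ρ := S6.rhox_nonneg hA
  have hU : ∀ m : ℕ, 1 ≤ m → rloc (A ^ m) (e i) ≤ ρ ^ m := fun m hm => S6.upper hA m hm
  have hL : ∀ m : ℕ, 1 ≤ m → ρ ^ m ≤ (n:ℝ) * rloc (A ^ m) (e i) := fun m hm => S6.lower hA m hm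
  have hL0 : ∀ m : ℕ, 0 ≤ rloc (A ^ m) (e i) := fun m => S6.rloc_nonneg hA m
  have hub : ∀ m : ℕ, 1 ≤ m → rloc (A ^ m) (e i) ^ ((m:ℝ)⁻¹) ≤ ρ := by
    intro m hm
    have h1 := Real.rpow_le_rpow (hL0 m) (hU m hm) (by positivity : (0:ℝ) ≤ ((m:ℝ))⁻¹)
    rwa [Real.pow_rpow_inv_natCast hρ0 (by omega)] at h1
  have hlb : ∀ m : ℕ, 1 ≤ m →
      ρ / (n:ℝ) ^ ((m:ℝ)⁻¹) ≤ rloc (A ^ m) (e i) ^ ((m:ℝ)⁻¹) := by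
    intro m hm
    have h1 : ρ ^ m / (n:ℝ) ≤ rloc (A ^ m) (e i) := by
      rw [div_le_iff₀ (by linarith : (0:ℝ) < (n:ℝ))]
      calc ρ ^ m ≤ (n:ℝ) * rloc (A ^ m) (e i) := hL m hm
        _ = rloc (A ^ m) (e i) * (n:ℝ) := mul_comm _ _
    have h2 := Real.rpow_le_rpow (by positivity) h1 (by positivity : (0:ℝ) ≤ ((m:ℝ))⁻¹)
    rwa [Real.div_rpow (pow_nonneg hρ0 m) (by linarith : (0:ℝ) ≤ (n:ℝ)),
      Real.pow_rpow_inv_natCast hρ0 (by omega)] at h2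
  have hnlim : Filter.Tendsto (fun m : ℕ => (n:ℝ) ^ ((m:ℝ)⁻¹)) Filter.atTop (nhds 1) := by
    have h1 := S6.tendsto_const_rpow (b := (n:ℝ)) (by linarith) S6.tendsto_inv_nat
    simpa using h1
  have hlowlim : Filter.Tendsto (fun m : ℕ => ρ / (n:ℝ) ^ ((m:ℝ)⁻¹)) Filter.atTop (nhds ρ) := by
    have h1 := (tendsto_const_nhds (x := ρ)).div hnlim one_ne_zero
    simpa [Pi.div_def] using h1
  have htend : Filter.Tendsto (fun k : ℕ => rloc (A ^ k) (e i) ^ ((k:ℝ)⁻¹))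
      Filter.atTop (nhds ρ) := by
    refine tendsto_of_tendsto_of_tendsto_of_le_of_le' hlowlim tendsto_const_nhds ?_ ?_
    · filter_upwards [Filter.eventually_ge_atTop 1] with m hm; exact hlb m hm
    · filter_upwards [Filter.eventually_ge_atTop 1] with m hm; exact hub m hm
  refine ⟨htend, ?_, ?_⟩
  · have hbdd : BddAbove (Set.range fun m : ℕ+ =>
        rloc (A ^ (m:ℕ)) (e i) ^ (((m:ℕ):ℝ))⁻¹) := by
      refine ⟨ρ, ?_⟩
      rintro x ⟨m, rfl⟩
      exact hub (m:ℕ) m.pos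
    refine le_antisymm ?_ (ciSup_le fun m => hub (m:ℕ) m.pos)
    refine le_of_tendsto htend ?_
    filter_upwards [Filter.eventually_ge_atTop 1] with m hm
    exact le_ciSup hbdd (⟨m, hm⟩ : ℕ+)
  · have hterm_ge : ∀ m : ℕ+, ρ ≤ ((n:ℝ) * rloc (A ^ (m:ℕ)) (e i)) ^ (((m:ℕ):ℝ))⁻¹ := by
      intro m
      have h1 : ρ ^ (m:ℕ) ≤ (n:ℝ) * rloc (A ^ (m:ℕ)) (e i) := hL (m:ℕ) m.pos
      have h2 := Real.rpow_le_rpow (pow_nonneg hρ0 _) h1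
        (by positivity : (0:ℝ) ≤ (((m:ℕ):ℝ))⁻¹)
      rwa [Real.pow_rpow_inv_natCast hρ0 m.pos.ne'] at h2
    have hbddb : BddBelow (Set.range fun m : ℕ+ =>
        ((n:ℝ) * rloc (A ^ (m:ℕ)) (e i)) ^ (((m:ℕ):ℝ))⁻¹) := by
      refine ⟨ρ, ?_⟩
      rintro x ⟨m, rfl⟩
      exact hterm_ge m
    have hterm_le : ∀ m : ℕ+, ((n:ℝ) * rloc (A ^ (m:ℕ)) (e i)) ^ (((m:ℕ):ℝ))⁻¹
        ≤ (n:ℝ) ^ (((m:ℕ):ℝ))⁻¹ * ρ := by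
      intro m
      have h1 : (n:ℝ) * rloc (A ^ (m:ℕ)) (e i) ≤ (n:ℝ) * ρ ^ (m:ℕ) :=
        mul_le_mul_of_nonneg_left (hU (m:ℕ) m.pos) (by linarith)
      have h2 := Real.rpow_le_rpow (mul_nonneg (by linarith) (hL0 (m:ℕ))) h1
        (by positivity : (0:ℝ) ≤ (((m:ℕ):ℝ))⁻¹)
      rwa [Real.mul_rpow (by linarith : (0:ℝ) ≤ (n:ℝ)) (pow_nonneg hρ0 _),
        Real.pow_rpow_inv_natCast hρ0 m.pos.ne'] at h2
    refine le_antisymm (le_ciInf hterm_ge) ?_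
    have hlim2 : Filter.Tendsto (fun m : ℕ => (n:ℝ) ^ ((m:ℝ)⁻¹) * ρ) Filter.atTop (nhds ρ) := by
      have h1 := hnlim.mul (tendsto_const_nhds (x := ρ))
      simpa using h1
    refine ge_of_tendsto hlim2 ?_
    filter_upwards [Filter.eventually_ge_atTop 1] with m hm
    calc (⨅ k : ℕ+, ((n : ℝ) * rloc (A ^ (k : ℕ)) (e i)) ^ (((k : ℕ) : ℝ))⁻¹)
        ≤ ((n:ℝ) * rloc (A ^ ((⟨m, hm⟩ : ℕ+):ℕ)) (e i)) ^ ((((⟨m, hm⟩ : ℕ+):ℕ):ℝ))⁻¹ :=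
          ciInf_le hbddb (⟨m, hm⟩ : ℕ+)
      _ ≤ (n:ℝ) ^ ((m:ℝ)⁻¹) * ρ := hterm_le (⟨m, hm⟩ : ℕ+)
end

section
/- For any nonnegative n×n matrix A and nonnegative nonzero vector x, the classical local spectral radius satisfies ρ_x(A) = max{ ρ_{e_i}(A) : x_i ≠ 0 }. -/
open Filter Finset

open Topology

section Aux

variable {n : ℕ}

lemma aux_le_vnorm [Nonempty (Fin n)] (y : Fin n → ℝ) (j : Fin n) : y j ≤ vnorm y :=
  le_ciSup (Set.Finite.bddAbove (Set.finite_range y)) j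

lemma aux_vnorm_le [Nonempty (Fin n)] {y : Fin n → ℝ} {c : ℝ} (h : ∀ j, y j ≤ c) :
    vnorm y ≤ c := ciSup_le h

lemma aux_mulVec_e (M : Matrix (Fin n) (Fin n) ℝ) (i j : Fin n) :
    M.mulVec (e i) j = M j i := by
  simp [Matrix.mulVec, dotProduct, e, mul_ite]

lemma aux_pow_nonneg {A : Matrix (Fin n) (Fin n) ℝ} (hA : ∀ i j, 0 ≤ A i j) :
    ∀ k i j, 0 ≤ (A ^ k) i j := by
  intro k
  induction k with
  | zero => intro i j; simp [Matrix.one_apply]; split <;> norm_num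
  | succ k ih =>
      intro i j
      rw [pow_succ, Matrix.mul_apply]
      exact Finset.sum_nonneg fun l _ => mul_nonneg (ih i l) (hA l j)

lemma aux_rpow_root_le {u D : ℝ} (hu : 0 ≤ u) (hD : 1 ≤ D) {k : ℕ}
    (h : 0 < k → u ≤ D ^ k) : u ^ ((k : ℝ)⁻¹) ≤ D := by
  rcases Nat.eq_zero_or_pos k with rfl | hk
  · simpa using hD
  · have hD0 : (0:ℝ) ≤ D := zero_le_one.trans hD
    calc u ^ ((k:ℝ)⁻¹) ≤ (D ^ k) ^ ((k:ℝ)⁻¹) :=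
          Real.rpow_le_rpow hu (h hk) (by positivity)
      _ = D := by
          rw [← Real.rpow_natCast D k, ← Real.rpow_mul hD0,
            mul_inv_cancel₀ (by exact_mod_cast hk.ne' : (k:ℝ) ≠ 0), Real.rpow_one]

lemma aux_tendsto_rpow_inv_nat {c : ℝ} (hc : 0 < c) :
    Tendsto (fun k : ℕ => c ^ ((k : ℝ)⁻¹)) atTop (𝓝 1) := by
  have h0 : Tendsto (fun k : ℕ => ((k : ℝ))⁻¹) atTop (𝓝 0) :=
    tendsto_inv_atTop_nhds_zero_nat
  have := (Real.continuousAt_const_rpow (hc.ne')).tendsto.comp h0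
  simpa [Function.comp_def] using this

end Aux

/-- for nonzero `x ≥ 0`, `ρ_x(A) = max { ρ_{e_i}(A) : x_i ≠ 0 }`. -/
theorem stmt8 {n : ℕ} (A : Matrix (Fin n) (Fin n) ℝ) (hA : ∀ i j, 0 ≤ A i j)
    (x : Fin n → ℝ) (hx : ∀ i, 0 ≤ x i) (hx0 : x ≠ 0) :
    IsGreatest {r : ℝ | ∃ i : Fin n, x i ≠ 0 ∧ r = rhox A (e i)} (rhox A x) := by
  classical
  obtain ⟨i0, hi0⟩ : ∃ i, x i ≠ 0 := Function.ne_iff.mp hx0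
  haveI : Nonempty (Fin n) := ⟨i0⟩
  have hpow0 : ∀ k i j, 0 ≤ (A ^ k) i j := aux_pow_nonneg hA
  -- entrywise bound on powers
  set M : ℝ := 1 + ∑ i, ∑ j, A i j with hMdef
  have hsum0 : (0:ℝ) ≤ ∑ i, ∑ j, A i j :=
    Finset.sum_nonneg fun i _ => Finset.sum_nonneg fun j _ => hA i j
  have hM1 : (1:ℝ) ≤ M := by rw [hMdef]; linarith
  have hAM : ∀ i j, A i j ≤ M := by
    intro i j
    have h1 : A i j ≤ ∑ j', A i j' :=
      Finset.single_le_sum (fun l _ => hA i l) (Finset.mem_univ j)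
    have h2 : ∑ j', A i j' ≤ ∑ i', ∑ j', A i' j' :=
      Finset.single_le_sum (f := fun i' => ∑ j', A i' j')
        (fun l _ => Finset.sum_nonneg fun _ _ => hA l _) (Finset.mem_univ i)
    rw [hMdef]; linarith
  set C : ℝ := n * M with hCdef
  have hn1 : (1:ℝ) ≤ (n:ℝ) := by
    have : 0 < n := i0.pos
    exact_mod_cast this
  have hC1 : 1 ≤ C := by rw [hCdef]; nlinarith
  have hC0 : (0:ℝ) ≤ C := zero_le_one.trans hC1
  have hpowC : ∀ k i j, (A ^ k) i j ≤ C ^ k := by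
    intro k
    induction k with
    | zero => intro i j; simp [Matrix.one_apply]; split <;> norm_num
    | succ k ih =>
        intro i j
        rw [pow_succ, Matrix.mul_apply]
        calc ∑ l, (A ^ k) i l * A l j ≤ ∑ _l : Fin n, C ^ k * M :=
              Finset.sum_le_sum fun l _ =>
                mul_le_mul (ih i l) (hAM l j) (hA l j) (by positivity)
          _ = (n : ℝ) * M * C ^ k := by
              rw [Finset.sum_const, Finset.card_univ, Fintype.card_fin]; ring
          _ = C ^ k * C := by rw [hCdef]; ring
  -- the support and the basic sequences
  set P : Finset (Fin n) := Finset.univ.filter (fun i => x i ≠ 0) with hPdef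
  have hi0P : i0 ∈ P := by simp [hPdef, hi0]
  have hP : P.Nonempty := ⟨i0, hi0P⟩
  set m : ℕ → Fin n → ℝ := fun k i => vnorm ((A ^ k).mulVec (e i)) with hmdef
  set a : ℕ → ℝ := fun k => vnorm ((A ^ k).mulVec x) with hadef
  have hmv : ∀ (k : ℕ) (j : Fin n), ((A ^ k).mulVec x) j = ∑ l, (A ^ k) j l * x l := by
    intro k j; simp [Matrix.mulVec, dotProduct]
  have hentry_le_m : ∀ k i j, (A ^ k) j i ≤ m k i := by
    intro k i j
    have := aux_le_vnorm ((A ^ k).mulVec (e i)) j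
    rwa [aux_mulVec_e] at this
  have hm0 : ∀ k i, 0 ≤ m k i := fun k i => (hpow0 k i0 i).trans (hentry_le_m k i i0)
  have hmC : ∀ k i, m k i ≤ C ^ k := by
    intro k i
    apply aux_vnorm_le
    intro j
    rw [aux_mulVec_e]
    exact hpowC k j i
  have ha0 : ∀ k, 0 ≤ a k := by
    intro k
    have h1 : (0:ℝ) ≤ ((A ^ k).mulVec x) i0 := by
      rw [hmv]
      exact Finset.sum_nonneg fun l _ => mul_nonneg (hpow0 k i0 l) (hx l)
    exact h1.trans (aux_le_vnorm _ i0)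
  set S : ℝ := ∑ i, x i with hSdef
  set S' : ℝ := max S 1 with hS'def
  have hS'1 : 1 ≤ S' := le_max_right _ _
  have hS'0 : (0:ℝ) ≤ S' := zero_le_one.trans hS'1
  set B : ℕ → ℝ := fun k => P.sup' hP (fun i => m k i) with hBdef
  have hB0 : ∀ k, 0 ≤ B k :=
    fun k => (hm0 k i0).trans (Finset.le_sup' (f := fun i => m k i) hi0P)
  have hBC : ∀ k, B k ≤ C ^ k := fun k => Finset.sup'_le _ _ fun i _ => hmC k i
  have haB : ∀ k, a k ≤ S' * B k := by
    intro k
    have h1 : a k ≤ B k * S := by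
      apply aux_vnorm_le
      intro j
      rw [hmv k j]
      calc ∑ l, (A ^ k) j l * x l ≤ ∑ l, B k * x l := by
            apply Finset.sum_le_sum
            intro l _
            by_cases hl : x l = 0
            · simp [hl]
            · have hlP : l ∈ P := by simp [hPdef, hl]
              exact mul_le_mul_of_nonneg_right
                ((hentry_le_m k l j).trans (Finset.le_sup' (f := fun i => m k i) hlP)) (hx l)
        _ = B k * S := by rw [← Finset.mul_sum]
    calc a k ≤ B k * S := h1
      _ ≤ B k * S' := mul_le_mul_of_nonneg_left (le_max_left _ _) (hB0 k)
      _ = S' * B k := mul_comm _ _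
  have hma : ∀ i, x i ≠ 0 → ∀ k, m k i ≤ (x i)⁻¹ * a k := by
    intro i hi k
    have hxi : 0 < x i := (hx i).lt_of_ne (Ne.symm hi)
    apply aux_vnorm_le
    intro j
    rw [aux_mulVec_e, le_inv_mul_iff₀ hxi]
    calc x i * (A ^ k) j i = (A ^ k) j i * x i := mul_comm _ _
      _ ≤ ∑ l, (A ^ k) j l * x l :=
          Finset.single_le_sum (f := fun l => (A ^ k) j l * x l)
            (fun l _ => mul_nonneg (hpow0 k j l) (hx l)) (Finset.mem_univ i)
      _ = ((A ^ k).mulVec x) j := (hmv k j).symm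
      _ ≤ a k := aux_le_vnorm _ j
  -- rpow'd sequences and limsup identities
  have hrx : rhox A x = atTop.limsup (fun k : ℕ => a k ^ ((k:ℝ)⁻¹)) := rfl
  have hre : ∀ i : Fin n, rhox A (e i) = atTop.limsup (fun k : ℕ => m k i ^ ((k:ℝ)⁻¹)) :=
    fun i => rfl
  set D : ℝ := S' * C with hDdef
  have hD1 : 1 ≤ D := by rw [hDdef]; nlinarith
  have ha'le : ∀ k, a k ^ ((k:ℝ)⁻¹) ≤ D := by
    intro k
    apply aux_rpow_root_le (ha0 k) hD1
    intro hk
    calc a k ≤ S' * B k := haB k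
      _ ≤ S' * C ^ k := mul_le_mul_of_nonneg_left (hBC k) hS'0
      _ ≤ S' ^ k * C ^ k := mul_le_mul_of_nonneg_right (le_self_pow₀ hS'1 hk.ne') (by positivity)
      _ = D ^ k := by rw [hDdef]; exact (mul_pow S' C k).symm
  have hm'le : ∀ i k, m k i ^ ((k:ℝ)⁻¹) ≤ C := fun i k =>
    aux_rpow_root_le (hm0 k i) hC1 (fun _ => hmC k i)
  have hm'0 : ∀ i k, (0:ℝ) ≤ m k i ^ ((k:ℝ)⁻¹) := fun i k => Real.rpow_nonneg (hm0 k i) _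
  have ha'0 : ∀ k, (0:ℝ) ≤ a k ^ ((k:ℝ)⁻¹) := fun k => Real.rpow_nonneg (ha0 k) _
  have bdd_a' : IsBoundedUnder (· ≤ ·) atTop (fun k : ℕ => a k ^ ((k:ℝ)⁻¹)) :=
    isBoundedUnder_of ⟨D, ha'le⟩
  have cobdd_a' : IsCoboundedUnder (· ≤ ·) atTop (fun k : ℕ => a k ^ ((k:ℝ)⁻¹)) :=
    (isBoundedUnder_of_eventually_ge (a := (0:ℝ))
      (Eventually.of_forall ha'0)).isCoboundedUnder_le
  have bdd_m' : ∀ i : Fin n, IsBoundedUnder (· ≤ ·) atTop (fun k : ℕ => m k i ^ ((k:ℝ)⁻¹)) :=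
    fun i => isBoundedUnder_of ⟨C, hm'le i⟩
  have cobdd_m' : ∀ i : Fin n,
      IsCoboundedUnder (· ≤ ·) atTop (fun k : ℕ => m k i ^ ((k:ℝ)⁻¹)) :=
    fun i => (isBoundedUnder_of_eventually_ge (a := (0:ℝ))
      (Eventually.of_forall (hm'0 i))).isCoboundedUnder_le
  -- lower bound : each rhox A (e i) ≤ rhox A x
  have key_low : ∀ i : Fin n, x i ≠ 0 → rhox A (e i) ≤ rhox A x := by
    intro i hi
    have hxi : 0 < x i := (hx i).lt_of_ne (Ne.symm hi)
    have hc0 : (0:ℝ) < (x i)⁻¹ := inv_pos.2 hxi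
    have hub : Tendsto (fun k : ℕ => (x i)⁻¹ ^ ((k:ℝ)⁻¹)) atTop (𝓝 1) :=
      aux_tendsto_rpow_inv_nat hc0
    have hpt : ∀ k : ℕ, m k i ^ ((k:ℝ)⁻¹) ≤
        ((fun k : ℕ => (x i)⁻¹ ^ ((k:ℝ)⁻¹)) * (fun k : ℕ => a k ^ ((k:ℝ)⁻¹))) k := by
      intro k
      show m k i ^ ((k:ℝ)⁻¹) ≤ (x i)⁻¹ ^ ((k:ℝ)⁻¹) * a k ^ ((k:ℝ)⁻¹)
      rw [← Real.mul_rpow hc0.le (ha0 k)]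
      exact Real.rpow_le_rpow (hm0 k i) (hma i hi k) (by positivity)
    have bdd_u : IsBoundedUnder (· ≤ ·) atTop (fun k : ℕ => (x i)⁻¹ ^ ((k:ℝ)⁻¹)) :=
      hub.isBoundedUnder_le
    have hu0 : ∀ k : ℕ, (0:ℝ) ≤ (x i)⁻¹ ^ ((k:ℝ)⁻¹) := fun k => Real.rpow_nonneg hc0.le _
    have bdd_prod : IsBoundedUnder (· ≤ ·) atTop
        ((fun k : ℕ => (x i)⁻¹ ^ ((k:ℝ)⁻¹)) * (fun k : ℕ => a k ^ ((k:ℝ)⁻¹))) :=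
      isBoundedUnder_le_mul_of_nonneg (Eventually.of_forall hu0).frequently bdd_u
        (Eventually.of_forall ha'0) bdd_a'
    rw [hre i, hrx]
    calc atTop.limsup (fun k : ℕ => m k i ^ ((k:ℝ)⁻¹))
        ≤ atTop.limsup ((fun k : ℕ => (x i)⁻¹ ^ ((k:ℝ)⁻¹)) * (fun k : ℕ => a k ^ ((k:ℝ)⁻¹))) :=
          limsup_le_limsup (Eventually.of_forall hpt) (cobdd_m' i) bdd_prod
      _ ≤ atTop.limsup (fun k : ℕ => (x i)⁻¹ ^ ((k:ℝ)⁻¹)) *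
            atTop.limsup (fun k : ℕ => a k ^ ((k:ℝ)⁻¹)) :=
          limsup_mul_le (Eventually.of_forall hu0).frequently bdd_u (Eventually.of_forall ha'0) bdd_a'
      _ = atTop.limsup (fun k : ℕ => a k ^ ((k:ℝ)⁻¹)) := by rw [hub.limsup_eq, one_mul]
  -- upper bound : rhox A x ≤ sup' of the rhox A (e i)
  have hub' : Tendsto (fun k : ℕ => S' ^ ((k:ℝ)⁻¹)) atTop (𝓝 1) :=
    aux_tendsto_rpow_inv_nat (zero_lt_one.trans_le hS'1)
  have hS'rp0 : ∀ k : ℕ, (0:ℝ) ≤ S' ^ ((k:ℝ)⁻¹) := fun k => Real.rpow_nonneg hS'0 _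
  have bdd_uS : IsBoundedUnder (· ≤ ·) atTop (fun k : ℕ => S' ^ ((k:ℝ)⁻¹)) :=
    hub'.isBoundedUnder_le
  have bdd_sup : IsBoundedUnder (· ≤ ·) atTop
      (fun k : ℕ => P.sup' hP (fun i => m k i ^ ((k:ℝ)⁻¹))) :=
    isBoundedUnder_le_finset_sup' hP (fun i _ => bdd_m' i)
  have hsup0 : ∀ k : ℕ, (0:ℝ) ≤ P.sup' hP (fun i => m k i ^ ((k:ℝ)⁻¹)) :=
    fun k => (hm'0 i0 k).trans (Finset.le_sup' (f := fun i => m k i ^ ((k:ℝ)⁻¹)) hi0P)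
  have hpt2 : ∀ k : ℕ, a k ^ ((k:ℝ)⁻¹) ≤
      ((fun k : ℕ => S' ^ ((k:ℝ)⁻¹)) *
        (fun k : ℕ => P.sup' hP (fun i => m k i ^ ((k:ℝ)⁻¹)))) k := by
    intro k
    show a k ^ ((k:ℝ)⁻¹) ≤ S' ^ ((k:ℝ)⁻¹) * P.sup' hP (fun i => m k i ^ ((k:ℝ)⁻¹))
    have h1 : a k ^ ((k:ℝ)⁻¹) ≤ S' ^ ((k:ℝ)⁻¹) * B k ^ ((k:ℝ)⁻¹) := by
      rw [← Real.mul_rpow hS'0 (hB0 k)]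
      exact Real.rpow_le_rpow (ha0 k) (haB k) (by positivity)
    obtain ⟨i, hiP, hieq⟩ := Finset.exists_mem_eq_sup' hP (fun i => m k i)
    have hBk : B k = m k i := hieq
    have h2 : B k ^ ((k:ℝ)⁻¹) ≤ P.sup' hP (fun i => m k i ^ ((k:ℝ)⁻¹)) := by
      rw [hBk]
      exact Finset.le_sup' (f := fun i => m k i ^ ((k:ℝ)⁻¹)) hiP
    exact h1.trans (mul_le_mul_of_nonneg_left h2 (hS'rp0 k))
  have bdd_prod2 : IsBoundedUnder (· ≤ ·) atTop
      ((fun k : ℕ => S' ^ ((k:ℝ)⁻¹)) *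
        (fun k : ℕ => P.sup' hP (fun i => m k i ^ ((k:ℝ)⁻¹)))) :=
    isBoundedUnder_le_mul_of_nonneg (Eventually.of_forall hS'rp0).frequently bdd_uS
      (Eventually.of_forall hsup0) bdd_sup
  have key_up : rhox A x ≤ P.sup' hP (fun i => rhox A (e i)) := by
    rw [hrx]
    calc atTop.limsup (fun k : ℕ => a k ^ ((k:ℝ)⁻¹))
        ≤ atTop.limsup ((fun k : ℕ => S' ^ ((k:ℝ)⁻¹)) *
            (fun k : ℕ => P.sup' hP (fun i => m k i ^ ((k:ℝ)⁻¹)))) :=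
          limsup_le_limsup (Eventually.of_forall hpt2) cobdd_a' bdd_prod2
      _ ≤ atTop.limsup (fun k : ℕ => S' ^ ((k:ℝ)⁻¹)) *
            atTop.limsup (fun k : ℕ => P.sup' hP (fun i => m k i ^ ((k:ℝ)⁻¹))) :=
          limsup_mul_le (Eventually.of_forall hS'rp0).frequently bdd_uS
            (Eventually.of_forall hsup0) bdd_sup
      _ = P.sup' hP (fun i => atTop.limsup (fun k : ℕ => m k i ^ ((k:ℝ)⁻¹))) := by
          rw [hub'.limsup_eq, one_mul,
            limsup_finset_sup' hP (fun i _ => cobdd_m' i) (fun i _ => bdd_m' i)]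
      _ = P.sup' hP (fun i => rhox A (e i)) :=
          Finset.sup'_congr hP rfl (fun i _ => (hre i).symm)
  obtain ⟨i₁, hi₁P, hsup1⟩ := Finset.exists_mem_eq_sup' hP (fun i => rhox A (e i))
  have hi₁x : x i₁ ≠ 0 := by
    have := hi₁P
    rw [hPdef, Finset.mem_filter] at this
    exact this.2
  constructor
  · exact ⟨i₁, hi₁x,
      le_antisymm (key_up.trans (le_of_eq hsup1)) (key_low i₁ hi₁x)⟩
  · rintro r ⟨i, hi, rfl⟩
    exact key_low i hi
end

section
/- The distinguished spectrum map A ↦ σ_D(A) is upper semi-continuous on nonnegative n×n matrices: if A_k → A entrywise, λ_k ∈ σ_D(A_k), and λ_k → λ, then λ ∈ σ_D(A). -/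
open Filter Finset

/-- Distinguished spectrum: eigenvalues admitting a nonzero nonnegative eigenvector. -/
def distSpec {n : ℕ} (A : Matrix (Fin n) (Fin n) ℝ) : Set ℝ :=
  {l : ℝ | 0 ≤ l ∧ ∃ x : Fin n → ℝ, (∀ i, 0 ≤ x i) ∧ x ≠ 0 ∧ A.mulVec x = l • x}

/-- upper semicontinuity of the distinguished spectrum. -/
theorem stmt10 {n : ℕ} (A : Matrix (Fin n) (Fin n) ℝ)
    (Aseq : ℕ → Matrix (Fin n) (Fin n) ℝ)
    (hAseq : ∀ k i j, 0 ≤ Aseq k i j)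
    (hconv : ∀ i j, Filter.Tendsto (fun k => Aseq k i j) Filter.atTop (nhds (A i j)))
    (lam : ℕ → ℝ) (hlam : ∀ k, lam k ∈ distSpec (Aseq k))
    (l : ℝ) (hl : Filter.Tendsto lam Filter.atTop (nhds l)) :
    l ∈ distSpec A := by
  classical
  choose hnn x hx0 hxne hxeig using hlam
  -- normalize eigenvectors
  set y : ℕ → (Fin n → ℝ) := fun k => ‖x k‖⁻¹ • x k with hy
  have hys : ∀ k, y k ∈ Metric.sphere (0 : Fin n → ℝ) 1 := by
    intro k
    simp only [Metric.mem_sphere, dist_zero_right, hy]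
    exact norm_smul_inv_norm (hxne k)
  have hycomp : ∀ k i, 0 ≤ y k i := by
    intro k i
    simp only [hy, Pi.smul_apply, smul_eq_mul]
    exact mul_nonneg (inv_nonneg.2 (norm_nonneg _)) (hx0 k i)
  have hyeig : ∀ k, (Aseq k).mulVec (y k) = lam k • y k := by
    intro k
    simp only [hy, Matrix.mulVec_smul, hxeig k, smul_comm (lam k)]
  obtain ⟨z, hz, φ, hφ, hyz⟩ :=
    (isCompact_sphere (0 : Fin n → ℝ) 1).tendsto_subseq hys
  have hzcomp : ∀ i, Tendsto (fun k => y (φ k) i) atTop (nhds (z i)) := fun i =>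
    ((continuous_apply i).tendsto z).comp hyz
  refine ⟨ge_of_tendsto' hl hnn, z, fun i => ge_of_tendsto' (hzcomp i) (fun k => hycomp _ i), ?_, ?_⟩
  · intro h
    have : ‖z‖ = 1 := by simpa using hz
    rw [h] at this; simp at this
  · funext i
    have h1 : Tendsto (fun k => (Aseq (φ k)).mulVec (y (φ k)) i) atTop
        (nhds (A.mulVec z i)) := by
      simp only [Matrix.mulVec, dotProduct]
      exact tendsto_finset_sum _ fun j _ =>
        ((hconv i j).comp hφ.tendsto_atTop).mul (hzcomp j)
    have h2 : Tendsto (fun k => (Aseq (φ k)).mulVec (y (φ k)) i) atTop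
        (nhds (l * z i)) := by
      simp only [hyeig, Pi.smul_apply, smul_eq_mul]
      exact ((hl.comp hφ.tendsto_atTop).mul (hzcomp i))
    have := tendsto_nhds_unique h1 h2
    simpa using this
end
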